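/- arXiv:2306.02181 — 9 statements merged into one kernel-verified Lean document; each statement's English description precedes it below -/
import Mathlib

section
/- If a family of compact sets in ℝ^d has the property that every finite subfamily can be pierced by at most m k-flats (k-dimensional affine subspaces), then the whole family can be pierced by at most m k-flats. -/
/-!
Fix an ultrafilter `U` on the finite subfamilies that refines the order filter, and for each
finite `G` at most `m` flats piercing it, labelled by `Fin m`. Each member `B` of the family is
then, `U`-almost surely, pierced by the flat with one fixed label `i`. Fix a member `B₀` with
label `i` and write the flat `J_G` with label `i` as `q_G + span w_G` with `q_G ∈ B₀` and `w_G`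
an orthonormal `k`-frame. By compactness of `B₀` and of the space of frames, `(q_G, w_G)`
converges along `U` to some `(q, w)`, and `q + span w` meets every member labelled `i`, since
points of such a member lying on `J_G` converge to a point of the member, and incidence between
a point and `q + span w` is a closed condition.
-/

open Set Filter Topology Module
open scoped RealInnerProductSpace

/-- A `k`-flat in `ℝ^d`: a nonempty affine subspace whose direction has dimension `k`. -/
def IsKFlat (d k : ℕ) (J : AffineSubspace ℝ (EuclideanSpace ℝ (Fin d))) : Prop :=
  (J : Set (EuclideanSpace ℝ (Fin d))).Nonempty ∧ Module.finrank ℝ J.direction = k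

lemma IsCompact.exists_tendsto_of_eventually_mem {X ι : Type*} [TopologicalSpace X] {K : Set X}
    (hK : IsCompact K) {U : Ultrafilter ι} {x : ι → X} (hx : ∀ᶠ a in U, x a ∈ K) :
    ∃ y ∈ K, Tendsto x U (𝓝 y) :=
  hK.ultrafilter_le_nhds' (U.map x) hx

lemma Set.Finite.exists_fin_subset_range {α : Type*} [Nonempty α] {P : Set α} {m : ℕ}
    (hP : P.Finite) (hm : P.ncard ≤ m) : ∃ e : Fin m → α, P ⊆ range e := by
  classical
  obtain ⟨n, f, hf, rfl⟩ := hP.fin_param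
  have hnm : n ≤ m := by simpa [ncard_range_of_injective hf] using hm
  refine ⟨fun i => if h : (i : ℕ) < n then f ⟨i, h⟩ else Classical.arbitrary α, ?_⟩
  rintro _ ⟨j, rfl⟩
  exact ⟨Fin.castLE hnm j, by simp⟩

theorem exists_piercing_of_forall_finite {α β : Type*} [Nonempty α] (R : β → α → Prop)
    (p : α → Prop) {F : Set β} {m : ℕ}
    (hlim : ∀ (U : Ultrafilter (Finset β)) (J : Finset β → α), (∀ᶠ G in U, p (J G)) →
      ∀ B₀ ∈ F, (∀ᶠ G in U, R B₀ (J G)) →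
        ∃ L, p L ∧ ∀ B ∈ F, (∀ᶠ G in U, R B (J G)) → R B L)
    (hfin : ∀ G ⊆ F, G.Finite →
      ∃ P : Set α, P.Finite ∧ P.ncard ≤ m ∧ (∀ J ∈ P, p J) ∧ ∀ B ∈ G, ∃ J ∈ P, R B J) :
    ∃ P : Set α, P.Finite ∧ P.ncard ≤ m ∧ (∀ J ∈ P, p J) ∧ ∀ B ∈ F, ∃ J ∈ P, R B J := by
  let U : Ultrafilter (Finset β) := .of atTop
  choose P hPfin hPm hPp hPR using fun G : Finset β =>
    hfin (↑G ∩ F) inter_subset_right (G.finite_toSet.inter_of_left F)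
  choose e he using fun G => (hPfin G).exists_fin_subset_range (hPm G)
  have hlabel : ∀ B : F, ∃ i, ∀ᶠ G in U, p (e G i) ∧ R B (e G i) := by
    rintro ⟨B, hB⟩
    have hBG : ∀ᶠ G in (U : Filter (Finset β)), B ∈ G := Ultrafilter.of_le atTop <|
      (eventually_ge_atTop {B}).mono fun G hG => hG (Finset.mem_singleton_self B)
    refine Ultrafilter.eventually_exists_iff.mp (hBG.mono fun G hG => ?_)
    obtain ⟨J, hJ, hBJ⟩ := hPR G B ⟨hG, hB⟩
    obtain ⟨i, rfl⟩ := he G hJ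
    exact ⟨i, hPp G _ hJ, hBJ⟩
  choose f hf using hlabel
  have hL : ∀ i : range f, ∃ L, p L ∧ ∀ B : F, f B = i → R B L := by
    rintro ⟨_, B₀, rfl⟩
    obtain ⟨L, hpL, hRL⟩ := hlim U (fun G => e G (f B₀)) ((hf B₀).mono fun _ h => h.1)
      B₀ B₀.2 ((hf B₀).mono fun _ h => h.2)
    exact ⟨L, hpL, fun B (hB : f B = f B₀) => hRL B B.2 (hB ▸ (hf B).mono fun _ h => h.2)⟩
  choose L hpL hRL using hL
  have : Finite (range f) := Subtype.finite
  refine ⟨range L, finite_range L, ?_, forall_mem_range.mpr hpL,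
    fun B hB => ⟨_, mem_range_self ⟨_, mem_range_self ⟨B, hB⟩⟩, hRL _ ⟨B, hB⟩ rfl⟩⟩
  calc (range L).ncard = Nat.card (range L) := (Nat.card_coe_set_eq _).symm
    _ ≤ Nat.card (range f) := Finite.card_range_le L
    _ = (range f).ncard := Nat.card_coe_set_eq _
    _ ≤ Nat.card (Fin m) := ncard_le_card _
    _ = m := Nat.card_fin m

section Flats

variable {E : Type*} [NormedAddCommGroup E] [InnerProductSpace ℝ E]

theorem Orthonormal.sum_inner_smul_eq_self_iff {ι : Type*} [Fintype ι] {v : ι → E}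
    (hv : Orthonormal ℝ v) {x : E} :
    ∑ i, ⟪v i, x⟫ • v i = x ↔ x ∈ Submodule.span ℝ (range v) := by
  constructor
  · intro hx
    rw [← hx]
    exact Submodule.sum_mem _ fun i _ =>
      Submodule.smul_mem _ _ (Submodule.subset_span (mem_range_self i))
  · intro hx
    obtain ⟨c, rfl⟩ := (Submodule.mem_span_range_iff_exists_fun ℝ).mp hx
    simp [hv.inner_right_fintype]

variable [FiniteDimensional ℝ E]

theorem isCompact_setOf_orthonormal (ι : Type*) : IsCompact {w : ι → E | Orthonormal ℝ w} := by
  refine (isCompact_univ_pi fun _ => isCompact_sphere (0 : E) 1).of_isClosed_subset ?_ ?_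
  · classical
    simp only [orthonormal_iff_ite, ofPred_forall]
    exact isClosed_iInter fun i => isClosed_iInter fun j =>
      isClosed_eq (by fun_prop) continuous_const
  · intro w hw i _
    simpa using hw.norm_eq_one i

theorem AffineSubspace.exists_orthonormal_eq_mk' {k : ℕ} {J : AffineSubspace ℝ E} {q : E}
    (hq : q ∈ J) (hJ : finrank ℝ J.direction = k) :
    ∃ w : Fin k → E, Orthonormal ℝ w ∧ J = mk' q (Submodule.span ℝ (range w)) := by
  let b := (stdOrthonormalBasis ℝ J.direction).reindex (finCongr hJ)
  refine ⟨fun i => b i, b.orthonormal.comp_linearIsometry J.direction.subtypeₗᵢ, ?_⟩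
  have hspan : Submodule.span ℝ (range fun i => (b i : E)) = J.direction := by
    change Submodule.span ℝ (range (J.direction.subtype ∘ b)) = _
    rw [range_comp, Submodule.span_image, ← b.coe_toBasis, b.toBasis.span_eq,
      Submodule.map_subtype_top]
  rw [hspan, mk'_eq hq]

theorem exists_flat_forall_inter_nonempty_of_eventually {ι : Type*} (U : Ultrafilter ι) {k : ℕ}
    (J : ι → AffineSubspace ℝ E) (hJ : ∀ᶠ a in U, finrank ℝ (J a).direction = k) {K : Set E}
    (hK : IsCompact K) (hKJ : ∀ᶠ a in U, (K ∩ (J a : Set E)).Nonempty) :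
    ∃ L : AffineSubspace ℝ E, (L : Set E).Nonempty ∧ finrank ℝ L.direction = k ∧
      ∀ B, IsCompact B → (∀ᶠ a in U, (B ∩ (J a : Set E)).Nonempty) →
        (B ∩ (L : Set E)).Nonempty := by
  have hframe : ∀ᶠ a in U, ∃ qw : E × (Fin k → E), qw ∈ K ×ˢ {w | Orthonormal ℝ w} ∧
      J a = .mk' qw.1 (Submodule.span ℝ (range qw.2)) := by
    filter_upwards [hJ, hKJ] with a ha ⟨q, hqK, hqJ⟩
    obtain ⟨w, hw, hJw⟩ := (J a).exists_orthonormal_eq_mk' hqJ ha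
    exact ⟨(q, w), ⟨hqK, hw⟩, hJw⟩
  obtain ⟨qw, hqw⟩ := hframe.choice
  obtain ⟨⟨p, w⟩, ⟨-, hw⟩, hqw_lim⟩ := (hK.prod (isCompact_setOf_orthonormal (Fin k)))
    |>.exists_tendsto_of_eventually_mem (hqw.mono fun _ h => h.1)
  refine ⟨.mk' p (Submodule.span ℝ (range w)), ⟨p, AffineSubspace.self_mem_mk' _ _⟩, ?_,
    fun B hB hBJ => ?_⟩
  · rw [AffineSubspace.direction_mk', finrank_span_eq_card hw.linearIndependent,
      Fintype.card_fin]
  obtain ⟨x, hx⟩ := hBJ.choice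
  obtain ⟨y, hyB, hxy⟩ := hB.exists_tendsto_of_eventually_mem (hx.mono fun _ h => h.1)
  -- for orthonormal `w`, the defining equation says `x ∈ mk' q (span ℝ (range w))`
  have hclosed : IsClosed {z : (E × (Fin k → E)) × E |
      ∑ i, ⟪z.1.2 i, z.2 - z.1.1⟫ • z.1.2 i = z.2 - z.1.1} :=
    isClosed_eq (by fun_prop) (by fun_prop)
  have hyw := hclosed.mem_of_tendsto (hqw_lim.prodMk_nhds hxy) <| by
    filter_upwards [hqw, hx] with a ⟨⟨_, hwa⟩, hJa⟩ ⟨_, hxJ⟩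
    rw [SetLike.mem_coe, hJa, AffineSubspace.mem_mk', vsub_eq_sub] at hxJ
    exact hwa.sum_inner_smul_eq_self_iff.mpr hxJ
  refine ⟨y, hyB, ?_⟩
  rw [SetLike.mem_coe, AffineSubspace.mem_mk', vsub_eq_sub]
  exact hw.sum_inner_smul_eq_self_iff.mp hyw

end Flats

theorem compactness_piercing_general (d k m : ℕ) (F : Set (Set (EuclideanSpace ℝ (Fin d))))
    (hcomp : ∀ B ∈ F, IsCompact B)
    (hfin : ∀ G ⊆ F, G.Finite →
      ∃ P : Set (AffineSubspace ℝ (EuclideanSpace ℝ (Fin d))),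
        P.Finite ∧ P.ncard ≤ m ∧ (∀ J ∈ P, IsKFlat d k J) ∧
        ∀ B ∈ G, ∃ J ∈ P, (B ∩ (J : Set (EuclideanSpace ℝ (Fin d)))).Nonempty) :
    ∃ P : Set (AffineSubspace ℝ (EuclideanSpace ℝ (Fin d))),
      P.Finite ∧ P.ncard ≤ m ∧ (∀ J ∈ P, IsKFlat d k J) ∧
      ∀ B ∈ F, ∃ J ∈ P, (B ∩ (J : Set (EuclideanSpace ℝ (Fin d)))).Nonempty := by
  refine exists_piercing_of_forall_finite _ (IsKFlat d k) (fun U J hJ B₀ hB₀ hB₀J => ?_) hfin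
  obtain ⟨L, hL, hLk, hBL⟩ := exists_flat_forall_inter_nonempty_of_eventually U J
    (hJ.mono fun _ h => h.2) (hcomp B₀ hB₀) hB₀J
  exact ⟨L, ⟨hL, hLk⟩, fun B hB => hBL B (hcomp B hB)⟩

/-- If every finite subfamily of a family of compact nonempty sets in `ℝ^d` can be pierced by
at most `m` `k`-flats, then the whole family can be pierced by at most `m` `k`-flats. -/
theorem compactness_piercing (d k m : ℕ) (F : Set (Set (EuclideanSpace ℝ (Fin d))))
    (hcomp : ∀ B ∈ F, IsCompact B) (hne : ∀ B ∈ F, B.Nonempty)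
    (hfin : ∀ G ⊆ F, G.Finite →
      ∃ P : Set (AffineSubspace ℝ (EuclideanSpace ℝ (Fin d))),
        P.Finite ∧ P.ncard ≤ m ∧ (∀ J ∈ P, IsKFlat d k J) ∧
        ∀ B ∈ G, ∃ J ∈ P, (B ∩ (J : Set (EuclideanSpace ℝ (Fin d)))).Nonempty) :
    ∃ P : Set (AffineSubspace ℝ (EuclideanSpace ℝ (Fin d))),
      P.Finite ∧ P.ncard ≤ m ∧ (∀ J ∈ P, IsKFlat d k J) ∧
      ∀ B ∈ F, ∃ J ∈ P, (B ∩ (J : Set (EuclideanSpace ℝ (Fin d)))).Nonempty :=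
  compactness_piercing_general d k m F hcomp hfin
end

section
/- The family of open discs F_n = B((n, 1/n), 1/n) for n ≥ 1 in the plane cannot be pierced by any finite set of lines: every line intersects only finitely many members of the family. -/
/-- A line in the plane: a nonempty affine subspace of dimension 1. -/
def IsLine (L : AffineSubspace ℝ (EuclideanSpace ℝ (Fin 2))) : Prop :=
  (L : Set (EuclideanSpace ℝ (Fin 2))).Nonempty ∧ Module.finrank ℝ L.direction = 1

/-- The center `(n, 1/n)` of the `n`-th disc. -/
noncomputable def discCenter (n : ℕ) : EuclideanSpace ℝ (Fin 2) :=
  (WithLp.equiv 2 (Fin 2 → ℝ)).symm ![(n : ℝ), 1 / n]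

/-!
A line `L` lies in the zero set of `a x + b y - c` with `(a, b) ≠ 0`, and the `n`-th disc lies in
the region `x > n - 1`, `0 < y < 2 / n`. If `a ≠ 0`, the abscissa of `L` is bounded on the strip
`0 < y < 2`, so `L` misses the discs far to the right; if `a = 0`, `L` is the horizontal line
`y = c / b`, which lies above the `n`-th disc as soon as `2 / n ≤ c / b`. Finitely many lines
therefore meet only finitely many discs.
-/

open Module Metric

theorem AffineSubspace.exists_dual_ne_zero_forall_eq {k V : Type*} [Field k] [AddCommGroup V]
    [Module k V] (s : AffineSubspace k V) (hs : s.direction ≠ ⊤) :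
    ∃ f : Dual k V, f ≠ 0 ∧ ∃ c, ∀ p ∈ s, f p = c := by
  obtain ⟨f, hf, hmap⟩ := s.direction.exists_dual_map_eq_bot_of_lt_top hs.lt_top inferInstance
  refine ⟨f, hf, ?_⟩
  rcases (s : Set V).eq_empty_or_nonempty with h | ⟨p₀, hp₀⟩
  · exact ⟨0, fun p hp => (h.subset hp).elim⟩
  refine ⟨f p₀, fun p hp => ?_⟩
  have : f (p -ᵥ p₀) = 0 := by
    rw [← Submodule.mem_bot k, ← hmap]
    exact Submodule.mem_map_of_mem (s.vsub_mem_direction hp hp₀)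
  rwa [vsub_eq_sub, map_sub, sub_eq_zero] at this

theorem EuclideanSpace.dual_apply_eq_sum {ι : Type*} [Fintype ι] [DecidableEq ι]
    (f : Dual ℝ (EuclideanSpace ℝ ι)) (p : EuclideanSpace ℝ ι) :
    f p = ∑ i, p i * f (EuclideanSpace.single i 1) := by
  conv_lhs => rw [← (EuclideanSpace.basisFun ι ℝ).sum_repr p]
  simp [map_sum]

theorem IsLine.exists_linear_eq {L : AffineSubspace ℝ (EuclideanSpace ℝ (Fin 2))} (hL : IsLine L) :
    ∃ a b c : ℝ, (a ≠ 0 ∨ b ≠ 0) ∧ ∀ p ∈ L, a * p 0 + b * p 1 = c := by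
  have hdir : L.direction ≠ ⊤ := fun h => by
    have := hL.2
    rw [h, finrank_top, finrank_euclideanSpace_fin] at this
    exact absurd this (by norm_num)
  obtain ⟨f, hf, c, hfc⟩ := L.exists_dual_ne_zero_forall_eq hdir
  have hf_apply (p : EuclideanSpace ℝ (Fin 2)) :
      f p = f (EuclideanSpace.single 0 1) * p 0 + f (EuclideanSpace.single 1 1) * p 1 := by
    rw [EuclideanSpace.dual_apply_eq_sum, Fin.sum_univ_two]
    ring
  refine ⟨_, _, c, ?_, fun p hp => (hf_apply p).symm.trans (hfc p hp)⟩
  by_contra! h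
  exact hf (LinearMap.ext fun p => by rw [hf_apply, h.1, h.2, LinearMap.zero_apply]; ring)

theorem coord_bounds_of_mem_ball_discCenter {n : ℕ} (hn : 1 ≤ n) {p : EuclideanSpace ℝ (Fin 2)}
    (hp : p ∈ ball (discCenter n) (1 / n)) : (n : ℝ) - 1 < p 0 ∧ 0 < p 1 ∧ p 1 < 2 / n := by
  have hn' : (1 : ℝ) ≤ n := by exact_mod_cast hn
  have h0 := (PiLp.dist_apply_le p (discCenter n) 0).trans_lt hp
  have h1 := (PiLp.dist_apply_le p (discCenter n) 1).trans_lt hp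
  change |p 0 - n| < 1 / n at h0
  change |p 1 - 1 / n| < 1 / n at h1
  have : 1 / (n : ℝ) ≤ 1 := by rw [div_le_one (by positivity)]; exact hn'
  have : 2 / (n : ℝ) = 1 / n + 1 / n := by ring
  rw [abs_lt] at h0 h1
  refine ⟨by linarith, by linarith, by linarith⟩

theorem Nat.finite_setOf_of_forall_cast_lt {S : Set ℕ} {R : ℝ} (h : ∀ n ∈ S, (n : ℝ) < R) :
    S.Finite :=
  (Set.finite_lt_nat ⌈R⌉₊).subset fun n hn => by
    simpa using Nat.cast_lt.mp ((h n hn).trans_le (Nat.le_ceil R))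

theorem finite_setOf_exists_mem_ball_discCenter_linear_eq {a b c : ℝ} (hab : a ≠ 0 ∨ b ≠ 0) :
    {n : ℕ | 1 ≤ n ∧ ∃ p ∈ ball (discCenter n) (1 / n), a * p 0 + b * p 1 = c}.Finite := by
  rcases eq_or_ne a 0 with rfl | ha
  · have hb := hab.resolve_left (not_not.mpr rfl)
    refine Nat.finite_setOf_of_forall_cast_lt (R := 2 / (c / b)) ?_
    rintro n ⟨hn, p, hp, hpc⟩
    obtain ⟨-, hp1, hp1n⟩ := coord_bounds_of_mem_ball_discCenter hn hp
    have : p 1 = c / b := by rw [eq_div_iff hb]; linarith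
    rw [this] at hp1 hp1n
    rw [lt_div_iff₀ hp1]
    rwa [lt_div_iff₀ (by positivity), mul_comm] at hp1n
  · refine Nat.finite_setOf_of_forall_cast_lt (R := 1 + (|c| + 2 * |b|) / |a|) ?_
    rintro n ⟨hn, p, hp, hpc⟩
    obtain ⟨hp0, hp1, hp1n⟩ := coord_bounds_of_mem_ball_discCenter hn hp
    have hp1_le : p 1 ≤ 2 := hp1n.le.trans (div_le_self zero_le_two (by exact_mod_cast hn))
    have : |a| * p 0 ≤ |c| + 2 * |b| := calc
      |a| * p 0 ≤ |a * p 0| := by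
        rw [abs_mul]; exact mul_le_mul_of_nonneg_left (le_abs_self _) (abs_nonneg a)
      _ = |c - b * p 1| := by rw [← hpc, add_sub_cancel_right]
      _ ≤ |c| + |b| * p 1 := (abs_sub c (b * p 1)).trans_eq (by rw [abs_mul, abs_of_pos hp1])
      _ ≤ |c| + 2 * |b| := by nlinarith [abs_nonneg b]
    have : p 0 ≤ (|c| + 2 * |b|) / |a| := by rw [le_div_iff₀ (abs_pos.mpr ha)]; linarith
    linarith

theorem IsLine.finite_setOf_ball_discCenter_inter_nonempty
    {L : AffineSubspace ℝ (EuclideanSpace ℝ (Fin 2))} (hL : IsLine L) :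
    {n : ℕ | 1 ≤ n ∧
      (ball (discCenter n) (1 / n) ∩ (L : Set (EuclideanSpace ℝ (Fin 2)))).Nonempty}.Finite := by
  obtain ⟨a, b, c, hab, hLc⟩ := hL.exists_linear_eq
  refine (finite_setOf_exists_mem_ball_discCenter_linear_eq (c := c) hab).subset ?_
  rintro n ⟨hn, p, hpB, hpL⟩
  exact ⟨hn, p, hpB, hLc p hpL⟩

/-- The family of open discs `F_n = B((n, 1/n), 1/n)`, `n ≥ 1`, cannot be pierced by a finite
set of lines: every line meets only finitely many members, and no finite family of lines
pierces all members. -/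
theorem discs_not_pierced_by_finitely_many_lines :
    (∀ L : AffineSubspace ℝ (EuclideanSpace ℝ (Fin 2)), IsLine L →
      {n : ℕ | 1 ≤ n ∧
        (Metric.ball (discCenter n) (1 / n) ∩
          (L : Set (EuclideanSpace ℝ (Fin 2)))).Nonempty}.Finite) ∧
    ¬ ∃ P : Set (AffineSubspace ℝ (EuclideanSpace ℝ (Fin 2))),
        P.Finite ∧ (∀ L ∈ P, IsLine L) ∧
        ∀ n : ℕ, 1 ≤ n → ∃ L ∈ P,
          (Metric.ball (discCenter n) (1 / n) ∩
            (L : Set (EuclideanSpace ℝ (Fin 2)))).Nonempty := by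
  refine ⟨fun L hL => hL.finite_setOf_ball_discCenter_inter_nonempty, ?_⟩
  rintro ⟨P, hPfin, hPline, hP⟩
  refine Set.Ici_infinite 1 ((hPfin.biUnion fun L hL =>
    (hPline L hL).finite_setOf_ball_discCenter_inter_nonempty).subset fun n hn => ?_)
  obtain ⟨L, hLP, hnL⟩ := hP n hn
  exact Set.mem_biUnion hLP ⟨hn, hnL⟩
end

section
/- For the family of open discs F_n = B((n, 1/n), 1/n), n ≥ 1, in the plane, any subfamily that is independent with respect to lines (no line meets three of its members) has at most 2 elements; that is, for any three indices i < j < k, there exists a line intersecting all of F_i, F_j, F_k. -/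
/-- The point `(n, 1/k)`. -/
noncomputable def linePt (n k : ℕ) : EuclideanSpace ℝ (Fin 2) :=
  (WithLp.equiv 2 (Fin 2 → ℝ)).symm ![(n : ℝ), 1 / k]

lemma dist_linePt (n k : ℕ) (hn : 1 ≤ n) (hnk : n ≤ k) :
    dist (linePt n k) (discCenter n) < 1 / n := by
  have hn0 : (0:ℝ) < n := by exact_mod_cast hn
  have hk0 : (0:ℝ) < k := lt_of_lt_of_le hn0 (by exact_mod_cast hnk)
  have hle : (1:ℝ)/k ≤ 1/n := by
    apply one_div_le_one_div_of_le hn0; exact_mod_cast hnk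
  have : dist (linePt n k) (discCenter n) = |1/(k:ℝ) - 1/(n:ℝ)| := by
    rw [EuclideanSpace.dist_eq]
    simp [linePt, discCenter, Fin.sum_univ_two]
    rw [Real.dist_eq]
  rw [this, abs_sub_comm, abs_of_nonneg (by linarith)]
  have : (0:ℝ) < 1/k := by positivity
  linarith

/-- For any three members of the family of discs `F_n = B((n, 1/n), 1/n)` (`n ≥ 1`), there is a
line intersecting all three. -/
theorem discs_any_three_pierced_by_a_line (i j k : ℕ) (hi : 1 ≤ i) (hij : i < j) (hjk : j < k) :
    ∃ L : AffineSubspace ℝ (EuclideanSpace ℝ (Fin 2)), IsLine L ∧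
      (Metric.ball (discCenter i) (1 / i) ∩ (L : Set (EuclideanSpace ℝ (Fin 2)))).Nonempty ∧
      (Metric.ball (discCenter j) (1 / j) ∩ (L : Set (EuclideanSpace ℝ (Fin 2)))).Nonempty ∧
      (Metric.ball (discCenter k) (1 / k) ∩ (L : Set (EuclideanSpace ℝ (Fin 2)))).Nonempty := by
  set a := linePt i k with ha
  set b := linePt k k with hb
  have hik : i < k := hij.trans hjk
  have hikR : (i:ℝ) < k := by exact_mod_cast hik
  have hab : a ≠ b := by
    intro h
    have := congrFun (congrArg (WithLp.equiv 2 (Fin 2 → ℝ)) h) 0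
    simp [ha, hb, linePt] at this
    omega
  refine ⟨affineSpan ℝ {a, b}, ⟨⟨a, ?_⟩, ?_⟩, ?_, ?_, ?_⟩
  · exact subset_affineSpan ℝ _ (by simp)
  · rw [direction_affineSpan, vectorSpan_pair]
    rw [finrank_span_singleton (by simpa using vsub_ne_zero.2 hab)]
  · exact ⟨a, dist_linePt i k hi hik.le, subset_affineSpan ℝ _ (by simp)⟩
  · refine ⟨linePt j k, dist_linePt j k (hi.trans hij.le) hjk.le, ?_⟩
    have hmem := AffineMap.lineMap_mem_affineSpan_pair (((j:ℝ) - i)/((k:ℝ) - i)) a b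
    convert SetLike.mem_coe.2 hmem using 1
    have hki : (k:ℝ) - i ≠ 0 := by linarith
    apply (WithLp.equiv 2 (Fin 2 → ℝ)).injective
    funext x
    fin_cases x <;>
      simp [AffineMap.lineMap_apply, linePt, ha, hb, PiLp.add_apply, PiLp.smul_apply,
        PiLp.sub_apply, vsub_eq_sub, vadd_eq_add] <;>
      field_simp <;> ring
  · refine ⟨b, ?_, subset_affineSpan ℝ _ (by simp)⟩
    have hbk : b = discCenter k := rfl
    rw [hbk]
    simp only [dist_self, Metric.mem_ball]
    have hk1 : 1 ≤ k := by omega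
    have : (0:ℝ) < k := by exact_mod_cast hk1
    positivity
end

section
/- Every infinite family F of closed balls in ℝ^d satisfies exactly one of: (1) F can be pierced by a finite set of points; (2) F contains an infinite subfamily of pairwise disjoint balls. -/
/-!
A maximal pairwise disjoint subfamily of `F` is infinite as soon as every finite subfamily is
missed by some ball of `F`. This is clear if the balls of `F` escape every bounded set. Otherwise
all of them meet a compact set `K`; balls of radius `≥ δ` meeting `K` are pierced by a finite
`δ`-net of its `δ`-thickening, so by compactness an unpierceable `F` concentrates at some point
`p`: for every `ε`, the balls of `F` inside `closedBall p ε` are not finitely pierceable, in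
particular not by `{p}`. Finitely many balls missing `p` stay away from a neighbourhood of `p`,
and that neighbourhood contains another ball of `F` missing `p`.
-/

open Metric Set Bornology

section PseudoMetric

variable {E : Type*} [PseudoMetricSpace E]

def FinitelyPierceable (F : Set (E × ℝ)) : Prop :=
  ∃ P : Set E, P.Finite ∧ ∀ b ∈ F, ∃ p ∈ P, p ∈ closedBall b.1 b.2

theorem FinitelyPierceable.mono {F G : Set (E × ℝ)} (hF : FinitelyPierceable F) (hGF : G ⊆ F) :
    FinitelyPierceable G :=
  let ⟨P, hP, hPF⟩ := hF
  ⟨P, hP, fun b hb => hPF b (hGF hb)⟩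

theorem FinitelyPierceable.union {F G : Set (E × ℝ)} (hF : FinitelyPierceable F)
    (hG : FinitelyPierceable G) : FinitelyPierceable (F ∪ G) := by
  obtain ⟨P, hP, hPF⟩ := hF
  obtain ⟨Q, hQ, hQG⟩ := hG
  refine ⟨P ∪ Q, hP.union hQ, ?_⟩
  rintro b (hb | hb)
  · obtain ⟨p, hp, hpb⟩ := hPF b hb
    exact ⟨p, .inl hp, hpb⟩
  · obtain ⟨q, hq, hqb⟩ := hQG b hb
    exact ⟨q, .inr hq, hqb⟩

theorem FinitelyPierceable.finite_of_pairwiseDisjoint {S : Set (E × ℝ)}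
    (hpierce : FinitelyPierceable S) (hS : S.PairwiseDisjoint fun b => closedBall b.1 b.2) :
    S.Finite := by
  obtain ⟨P, hP, hPS⟩ := hpierce
  have : Finite P := hP
  choose f hf using fun b : S => hPS b b.2
  refine finite_coe_iff.1 (Finite.of_injective (β := P) (fun b => ⟨f b, (hf b).1⟩) ?_)
  intro b b' hbb'
  have hfbb' : f b = f b' := congrArg Subtype.val hbb'
  by_contra hne
  exact disjoint_left.1 (hS b.2 b'.2 (Subtype.coe_injective.ne hne)) (hf b).2 (hfbb' ▸ (hf b').2)

theorem exists_infinite_pairwiseDisjoint {ι α : Type*} {S : Set ι} {B : ι → Set α}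
    (hB : ∀ i ∈ S, (B i).Nonempty)
    (h : ∀ T ⊆ S, T.Finite → ∃ i ∈ S, Disjoint (B i) (⋃ j ∈ T, B j)) :
    ∃ T ⊆ S, T.Infinite ∧ T.PairwiseDisjoint B := by
  obtain ⟨M, ⟨hMS, hM⟩, hmax⟩ := zorn_subset {M | M ⊆ S ∧ M.PairwiseDisjoint B}
    fun c hc hchain => ⟨⋃₀ c, ⟨sUnion_subset fun M hM => (hc hM).1,
      (pairwiseDisjoint_sUnion hchain.directedOn).2 fun M hM => (hc hM).2⟩,
      fun _ => subset_sUnion_of_mem⟩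
  refine ⟨M, hMS, fun hfin => ?_, hM⟩
  obtain ⟨i, hiS, hi⟩ := h M hMS hfin
  have hiM : i ∉ M := fun hiM =>
    (hB i hiS).ne_empty (disjoint_self.1 (hi.mono_right (subset_biUnion_of_mem hiM)))
  exact hiM (hmax ⟨insert_subset hiS hMS, hM.insert fun j hj _ =>
    hi.mono_right (subset_biUnion_of_mem hj)⟩ (subset_insert i M) (mem_insert i M))

variable {F : Set (E × ℝ)}

theorem exists_infinite_pairwiseDisjoint_of_escaping (hr : ∀ b ∈ F, 0 ≤ b.2)
    (hF : ∀ s : Set E, IsBounded s → ∃ b ∈ F, Disjoint (closedBall b.1 b.2) s) :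
    ∃ S ⊆ F, S.Infinite ∧ S.PairwiseDisjoint fun b => closedBall b.1 b.2 :=
  exists_infinite_pairwiseDisjoint (B := fun b : E × ℝ => closedBall b.1 b.2)
    (fun b hb => nonempty_closedBall.2 (hr b hb)) fun _ _ hT =>
    hF _ ((isBounded_biUnion hT).2 fun _ _ => isBounded_closedBall)

def ConcentratesAt (F : Set (E × ℝ)) (p : E) : Prop :=
  ∀ ε > 0, ¬FinitelyPierceable {b ∈ F | closedBall b.1 b.2 ⊆ closedBall p ε}

theorem exists_infinite_pairwiseDisjoint_of_concentratesAt (hr : ∀ b ∈ F, 0 ≤ b.2) {p : E}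
    (hp : ConcentratesAt F p) :
    ∃ S ⊆ F, S.Infinite ∧ S.PairwiseDisjoint fun b => closedBall b.1 b.2 := by
  refine (exists_infinite_pairwiseDisjoint (S := {b ∈ F | p ∉ closedBall b.1 b.2})
    (B := fun b : E × ℝ => closedBall b.1 b.2) (fun b hb => nonempty_closedBall.2 (hr b hb.1))
    fun T hT hfin => ?_).imp fun S ⟨hS, hSdisj⟩ => ⟨hS.trans (sep_subset _ _), hSdisj⟩
  have hU : IsClosed (⋃ j ∈ T, closedBall j.1 j.2) :=
    hfin.isClosed_biUnion fun _ _ => isClosed_closedBall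
  have hpU : p ∉ ⋃ j ∈ T, closedBall j.1 j.2 := by
    simp only [mem_iUnion, not_exists]
    exact fun j hj => (hT hj).2
  obtain ⟨ε, hε, hεU⟩ := nhds_basis_closedBall.mem_iff.1 (hU.isOpen_compl.mem_nhds hpU)
  obtain ⟨b, ⟨hbF, hbε⟩, hpb⟩ :
      ∃ b ∈ {b ∈ F | closedBall b.1 b.2 ⊆ closedBall p ε}, p ∉ closedBall b.1 b.2 := by
    by_contra! h
    exact hp ε hε ⟨{p}, finite_singleton p, fun b hb => ⟨p, rfl, h b hb⟩⟩
  exact ⟨b, ⟨hbF, hpb⟩, subset_compl_iff_disjoint_right.1 (hbε.trans hεU)⟩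

end PseudoMetric

section Normed

variable {E : Type*} [NormedAddCommGroup E] [NormedSpace ℝ E] [ProperSpace E]

theorem finitelyPierceable_of_le_radius {K : Set E} (hK : IsCompact K) {δ : ℝ} (hδ : 0 < δ) :
    FinitelyPierceable {b : E × ℝ | δ ≤ b.2 ∧ ¬Disjoint (closedBall b.1 b.2) K} := by
  obtain ⟨P, -, hP, hcover⟩ := finite_cover_balls_of_compact (hK.cthickening (r := δ)) hδ
  refine ⟨P, hP, ?_⟩
  rintro ⟨c, r⟩ ⟨hδr, hcK⟩
  obtain ⟨w, hwc, hwK⟩ := not_disjoint_iff.1 hcK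
  obtain ⟨z, hwz, hzc⟩ := exists_dist_le_le hδ.le (sub_nonneg.2 hδr)
    (show dist w c ≤ (r - δ) + δ by simpa using mem_closedBall.1 hwc)
  obtain ⟨p, hpP, hzp⟩ :=
    mem_iUnion₂.1 (hcover (mem_cthickening_of_dist_le z w δ K hwK (dist_comm z w ▸ hwz)))
  refine ⟨p, hpP, mem_closedBall.2 ?_⟩
  linarith [dist_triangle p z c, mem_ball'.1 hzp]

variable {F : Set (E × ℝ)}

theorem exists_concentratesAt {K : Set E} (hK : IsCompact K)
    (hFK : ∀ b ∈ F, ¬Disjoint (closedBall b.1 b.2) K) (hF : ¬FinitelyPierceable F) :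
    ∃ p, ConcentratesAt F p := by
  unfold ConcentratesAt
  by_contra! hloc
  suffices FinitelyPierceable {b ∈ F | ¬Disjoint (closedBall b.1 b.2) K} from
    hF (this.mono fun b hb => ⟨hb, hFK b hb⟩)
  refine hK.induction_on
    (p := fun s => FinitelyPierceable {b ∈ F | ¬Disjoint (closedBall b.1 b.2) s}) ?_ ?_ ?_ ?_
  · exact ⟨∅, finite_empty, by simp⟩
  · intro s t hst ht
    refine ht.mono fun b ⟨hbF, hb⟩ => ?_
    exact ⟨hbF, fun h => hb (h.mono_right hst)⟩
  · intro s t hs ht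
    refine (hs.union ht).mono fun b ⟨hbF, hb⟩ => ?_
    rw [disjoint_union_right, not_and_or] at hb
    exact hb.imp (And.intro hbF) (And.intro hbF)
  intro x _
  obtain ⟨ε, hε, hx⟩ := hloc x
  have hfat := finitelyPierceable_of_le_radius (isCompact_closedBall x (ε / 4))
    (by positivity : 0 < ε / 4)
  refine ⟨closedBall x (ε / 4),
    mem_nhdsWithin_of_mem_nhds (closedBall_mem_nhds x (by positivity)), (hfat.union hx).mono ?_⟩
  -- a ball of radius `< ε / 4` meeting `closedBall x (ε / 4)` lies in `closedBall x ε`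
  rintro ⟨c, r⟩ ⟨hbF, hbx⟩
  rcases le_or_gt (ε / 4) r with hr | hr
  · exact .inl ⟨hr, hbx⟩
  obtain ⟨w, hwc, hwx⟩ := not_disjoint_iff.1 hbx
  refine .inr ⟨hbF, fun q hq => mem_closedBall.2 ?_⟩
  linarith [dist_triangle q c x, dist_triangle c w x, mem_closedBall.1 hq, mem_closedBall'.1 hwc,
    mem_closedBall.1 hwx]

theorem exists_infinite_pairwiseDisjoint_of_not_finitelyPierceable (hr : ∀ b ∈ F, 0 ≤ b.2)
    (hF : ¬FinitelyPierceable F) :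
    ∃ S ⊆ F, S.Infinite ∧ S.PairwiseDisjoint fun b => closedBall b.1 b.2 := by
  by_cases hesc : ∀ s : Set E, IsBounded s → ∃ b ∈ F, Disjoint (closedBall b.1 b.2) s
  · exact exists_infinite_pairwiseDisjoint_of_escaping hr hesc
  push Not at hesc
  obtain ⟨s, hs, hFs⟩ := hesc
  obtain ⟨p, hp⟩ := exists_concentratesAt hs.isCompact_closure
    (fun b hb h => hFs b hb (h.mono_right subset_closure)) hF
  exact exists_infinite_pairwiseDisjoint_of_concentratesAt hr hp

end Normed

theorem point_piercing_dichotomy_general (d : ℕ)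
    (F : Set (EuclideanSpace ℝ (Fin d) × ℝ))
    (hr : ∀ b ∈ F, 0 < b.2) :
    Xor'
      (∃ P : Set (EuclideanSpace ℝ (Fin d)), P.Finite ∧
        ∀ b ∈ F, ∃ p ∈ P, p ∈ Metric.closedBall b.1 b.2)
      (∃ S ⊆ F, S.Infinite ∧
        S.Pairwise (fun b b' =>
          Disjoint (Metric.closedBall b.1 b.2) (Metric.closedBall b'.1 b'.2))) := by
  by_cases hF : FinitelyPierceable F
  · exact .inl ⟨hF, fun ⟨S, hSF, hSinf, hS⟩ =>
      hSinf ((hF.mono hSF).finite_of_pairwiseDisjoint hS)⟩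
  · exact .inr ⟨exists_infinite_pairwiseDisjoint_of_not_finitelyPierceable
      (fun b hb => (hr b hb).le) hF, hF⟩

/-- Every infinite family of closed balls (of positive radii) in `ℝ^d`, represented by
center–radius pairs, satisfies exactly one of: (1) it can be pierced by a finite set of points;
(2) it contains an infinite subfamily of pairwise disjoint balls. -/
theorem point_piercing_dichotomy (d : ℕ)
    (F : Set (EuclideanSpace ℝ (Fin d) × ℝ)) (hinf : F.Infinite)
    (hr : ∀ b ∈ F, 0 < b.2) :
    Xor'
      (∃ P : Set (EuclideanSpace ℝ (Fin d)), P.Finite ∧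
        ∀ b ∈ F, ∃ p ∈ P, p ∈ Metric.closedBall b.1 b.2)
      (∃ S ⊆ F, S.Infinite ∧
        S.Pairwise (fun b b' =>
          Disjoint (Metric.closedBall b.1 b.2) (Metric.closedBall b'.1 b'.2))) :=
  point_piercing_dichotomy_general d F hr
end

section
/- Let F be an infinite family of closed balls in ℝ^d, each of positive radius, such that among every countably infinite subfamily of F some two balls intersect. Then F can be pierced by finitely many points. -/
/-!
A greedy choice shows that a subfamily with no infinite pairwise disjoint part contains a finite
part meeting each of its members. Applied to the whole family, every ball meets the compact union
`K` of finitely many balls. Applied to the balls avoiding a point `x`, every ball of the family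
lying close enough to `x` contains `x`; covering `K` by finitely many such neighbourhoods and
taking a Lebesgue number `2ρ`, finitely many points pierce all balls of radius `< ρ`. A ball of
radius `≥ ρ` meeting `K` contains a ball of radius `ρ` centred in the `ρ`-thickening of `K`, so a
finite `ρ`-net of that compact set pierces the remaining balls.
-/

open Metric Set Function

theorem exists_finset_forall_not_disjoint {ι X : Type*} {s : ι → Set X} {G : Set ι}
    (hne : ∀ i ∈ G, (s i).Nonempty)
    (hG : ∀ S ⊆ G, S.Infinite → ¬ S.Pairwise (Disjoint on s)) :
    ∃ D : Finset ι, ↑D ⊆ G ∧ ∀ i ∈ G, ∃ j ∈ D, ¬ Disjoint (s i) (s j) := by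
  by_contra! H
  obtain ⟨f, hfG, hf⟩ := exists_seq_of_forall_finset_exists (· ∈ G)
    (fun j i => Disjoint (s i) (s j)) fun D hD => H D hD
  have hdisj : Pairwise ((Disjoint on s) on f) := fun m n hmn =>
    hmn.lt_or_gt.elim (fun h => (hf m n h).symm) (hf n m)
  have hinj : Injective f := injective_iff_pairwise_ne.2 <| hdisj.mono fun m n h heq => by
    simp only [onFun, heq, disjoint_self, bot_eq_empty] at h
    exact (hne _ (hfG n)).ne_empty h
  exact hG (range f) (range_subset_iff.2 hfG) (infinite_range_of_injective hinj)
    hdisj.range_pairwise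

theorem exists_pos_forall_mem_of_closedBall_subset_ball {X : Type*} [MetricSpace X]
    {F : Set (X × ℝ)} (hr : ∀ b ∈ F, 0 ≤ b.2)
    (hF : ∀ S ⊆ F, S.Infinite → ¬ S.Pairwise (Disjoint on uncurry closedBall)) (x : X) :
    ∃ δ > 0, ∀ b ∈ F, closedBall b.1 b.2 ⊆ ball x δ → x ∈ closedBall b.1 b.2 := by
  set G := {b ∈ F | x ∉ closedBall b.1 b.2}
  obtain ⟨D, hDG, hD⟩ := exists_finset_forall_not_disjoint
    (s := uncurry closedBall) (G := G) (fun b hb => nonempty_closedBall.2 (hr b hb.1))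
    fun S hS => hF S (hS.trans (sep_subset _ _))
  have hU : IsClosed (⋃ b ∈ D, closedBall b.1 b.2) :=
    D.finite_toSet.isClosed_biUnion fun _ _ => isClosed_closedBall
  have hxU : x ∉ ⋃ b ∈ D, closedBall b.1 b.2 := by
    simpa only [mem_iUnion, not_exists] using fun b hb => (hDG (Finset.mem_coe.2 hb)).2
  obtain ⟨δ, hδ, hδU⟩ := Metric.isOpen_iff.1 hU.isOpen_compl x hxU
  refine ⟨δ, hδ, fun b hbF hbδ => by_contra fun hxb => ?_⟩
  obtain ⟨b', hb'D, hbb'⟩ := hD b ⟨hbF, hxb⟩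
  exact hbb' <| disjoint_left.2 fun z hzb hzb' =>
    hδU (hbδ hzb) (mem_biUnion hb'D hzb')

theorem exists_isCompact_forall_inter_nonempty {X : Type*} [MetricSpace X] [ProperSpace X]
    {F : Set (X × ℝ)} (hr : ∀ b ∈ F, 0 ≤ b.2)
    (hF : ∀ S ⊆ F, S.Infinite → ¬ S.Pairwise (Disjoint on uncurry closedBall)) :
    ∃ K : Set X, IsCompact K ∧ ∀ b ∈ F, (closedBall b.1 b.2 ∩ K).Nonempty := by
  obtain ⟨D, -, hD⟩ := exists_finset_forall_not_disjoint
    (s := uncurry closedBall) (fun b hb => nonempty_closedBall.2 (hr b hb)) hF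
  refine ⟨⋃ b ∈ D, closedBall b.1 b.2, D.isCompact_biUnion fun _ _ => isCompact_closedBall _ _,
    fun b hb => ?_⟩
  obtain ⟨b', hb'D, hbb'⟩ := hD b hb
  obtain ⟨z, hzb, hzb'⟩ := not_disjoint_iff.1 hbb'
  exact ⟨z, hzb, mem_biUnion hb'D hzb'⟩

theorem exists_finite_pierce_small_closedBalls {X : Type*} [MetricSpace X]
    {F : Set (X × ℝ)} (hr : ∀ b ∈ F, 0 ≤ b.2)
    (hF : ∀ S ⊆ F, S.Infinite → ¬ S.Pairwise (Disjoint on uncurry closedBall))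
    {K : Set X} (hK : IsCompact K) :
    ∃ P : Set X, P.Finite ∧ ∃ ρ > 0, ∀ b ∈ F, b.2 < ρ → (closedBall b.1 b.2 ∩ K).Nonempty →
      ∃ p ∈ P, p ∈ closedBall b.1 b.2 := by
  choose δ hδ hmem using exists_pos_forall_mem_of_closedBall_subset_ball hr hF
  obtain ⟨t, -, hKt⟩ := hK.elim_nhds_subcover (fun x => ball x (δ x))
    fun x _ => ball_mem_nhds x (hδ x)
  obtain ⟨ε, hε, hleb⟩ := lebesgue_number_lemma_of_metric (c := fun x : t => ball (x : X) (δ x))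
    hK (fun _ => isOpen_ball) (by simpa only [iUnion_subtype] using hKt)
  refine ⟨t, t.finite_toSet, ε / 2, half_pos hε, fun b hbF hb ⟨p, hpb, hpK⟩ => ?_⟩
  obtain ⟨x, hx⟩ := hleb p hpK
  refine ⟨x, x.2, hmem x b hbF fun z hz => hx ?_⟩
  rw [mem_closedBall] at hz hpb
  calc dist z p ≤ dist z b.1 + dist p b.1 := dist_triangle_right _ _ _
    _ < ε := by linarith

theorem exists_closedBall_subset_closedBall_of_mem {E : Type*} [NormedAddCommGroup E]
    [NormedSpace ℝ E] {x p : E} {r s : ℝ} (hr : 0 < r) (hrs : r ≤ s) (hp : p ∈ closedBall x s) :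
    ∃ q, dist q p ≤ r ∧ closedBall q r ⊆ closedBall x s := by
  have hs : 0 < s := hr.trans_le hrs
  rw [mem_closedBall] at hp
  have hc : ‖r / s‖ = r / s := Real.norm_of_nonneg (div_nonneg hr.le hs.le)
  have hc' : 0 ≤ 1 - r / s := sub_nonneg.2 ((div_le_one hs).2 hrs)
  refine ⟨AffineMap.lineMap p x (r / s), ?_, closedBall_subset_closedBall' ?_⟩
  · rw [dist_lineMap_left, hc]
    calc r / s * dist p x ≤ r / s * s := by gcongr
      _ = r := div_mul_cancel₀ r hs.ne'
  · rw [dist_lineMap_right, Real.norm_of_nonneg hc']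
    calc r + (1 - r / s) * dist p x ≤ r + (1 - r / s) * s := by gcongr
      _ = s := by field_simp; ring

theorem exists_finite_pierce_large_closedBalls {E : Type*} [NormedAddCommGroup E]
    [NormedSpace ℝ E] [ProperSpace E] {K : Set E} (hK : IsCompact K) {ρ : ℝ} (hρ : 0 < ρ) :
    ∃ P : Set E, P.Finite ∧ ∀ b : E × ℝ, ρ ≤ b.2 → (closedBall b.1 b.2 ∩ K).Nonempty →
      ∃ p ∈ P, p ∈ closedBall b.1 b.2 := by
  obtain ⟨P, -, hPfin, hP⟩ := finite_cover_balls_of_compact (hK.cthickening (r := ρ)) hρ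
  refine ⟨P, hPfin, fun b hb ⟨p, hpb, hpK⟩ => ?_⟩
  obtain ⟨q, hqp, hqb⟩ := exists_closedBall_subset_closedBall_of_mem hρ hb hpb
  obtain ⟨y, hyP, hyq⟩ := mem_iUnion₂.1 (hP (mem_cthickening_of_dist_le q p ρ K hpK hqp))
  exact ⟨y, hyP, hqb (mem_closedBall_comm.1 (ball_subset_closedBall hyq))⟩

theorem exists_finite_pierce_closedBalls {E : Type*} [NormedAddCommGroup E]
    [NormedSpace ℝ E] [ProperSpace E] {F : Set (E × ℝ)} (hr : ∀ b ∈ F, 0 ≤ b.2)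
    (hF : ∀ S ⊆ F, S.Infinite → ¬ S.Pairwise (Disjoint on uncurry closedBall)) :
    ∃ P : Set E, P.Finite ∧ ∀ b ∈ F, ∃ p ∈ P, p ∈ closedBall b.1 b.2 := by
  obtain ⟨K, hK, hFK⟩ := exists_isCompact_forall_inter_nonempty hr hF
  obtain ⟨P₁, hP₁, ρ, hρ, hsmall⟩ := exists_finite_pierce_small_closedBalls hr hF hK
  obtain ⟨P₂, hP₂, hlarge⟩ := exists_finite_pierce_large_closedBalls hK hρ
  refine ⟨P₁ ∪ P₂, hP₁.union hP₂, fun b hb => ?_⟩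
  rcases lt_or_ge b.2 ρ with hbρ | hbρ
  · obtain ⟨p, hp, hpb⟩ := hsmall b hb hbρ (hFK b hb)
    exact ⟨p, .inl hp, hpb⟩
  · obtain ⟨p, hp, hpb⟩ := hlarge b hbρ (hFK b hb)
    exact ⟨p, .inr hp, hpb⟩

theorem aleph0_two_theorem_points_general (d : ℕ)
    (F : Set (EuclideanSpace ℝ (Fin d) × ℝ))
    (hr : ∀ b ∈ F, 0 < b.2)
    (hprop : ∀ S ⊆ F, S.Infinite → ∃ b ∈ S, ∃ b' ∈ S, b ≠ b' ∧
      ¬ Disjoint (Metric.closedBall b.1 b.2) (Metric.closedBall b'.1 b'.2)) :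
    ∃ P : Set (EuclideanSpace ℝ (Fin d)), P.Finite ∧
      ∀ b ∈ F, ∃ p ∈ P, p ∈ Metric.closedBall b.1 b.2 := by
  refine exists_finite_pierce_closedBalls (fun b hb => (hr b hb).le) fun S hS hSinf hdisj => ?_
  obtain ⟨b, hb, b', hb', hbb', hmeet⟩ := hprop S hS hSinf
  exact hmeet (hdisj hb hb' hbb')

/-- The `(ℵ₀, 2)`-theorem for points: if among every infinite subfamily of an infinite family of
closed balls (of positive radii) in `ℝ^d` some two balls intersect, then the family can be
pierced by finitely many points. -/
theorem aleph0_two_theorem_points (d : ℕ)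
    (F : Set (EuclideanSpace ℝ (Fin d) × ℝ)) (hinf : F.Infinite)
    (hr : ∀ b ∈ F, 0 < b.2)
    (hprop : ∀ S ⊆ F, S.Infinite → ∃ b ∈ S, ∃ b' ∈ S, b ≠ b' ∧
      ¬ Disjoint (Metric.closedBall b.1 b.2) (Metric.closedBall b'.1 b'.2)) :
    ∃ P : Set (EuclideanSpace ℝ (Fin d)), P.Finite ∧
      ∀ b ∈ F, ∃ p ∈ P, p ∈ Metric.closedBall b.1 b.2 :=
  aleph0_two_theorem_points_general d F hr hprop
end

section
/- Let K > 0, let α > 0 satisfy α(1 + πK/2) < π/4, and let ℓ be a ray from the origin in ℝ^d with unit direction u. Let B(x, r) be a closed ball with r ≤ dist(x, ℓ), whose center x lies in the cone C(u, α) = {y ≠ 0 : ⟨u, y⟩ ≥ ‖y‖ cos α}. Then the ball B(x, K·r) is contained in the cone C(u, π/4). -/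
/-!
The cone condition says `∠(u, x) ≤ α`, so the distance from `x` to the ray is at most
`‖x‖ sin α ≤ α ‖x‖`. Every `p ∈ B(x, K r)` is then within `K α ‖x‖ < ‖x‖` of `x`, whence
`sin ∠(x, p) ≤ K α` with `∠(x, p)` acute, and Jordan's inequality gives `∠(x, p) ≤ π K α / 2`.
The triangle inequality for angles yields `∠(u, p) ≤ α (1 + π K / 2) < π / 4`.
-/

open scoped RealInnerProductSpace
open Real

namespace InnerProductGeometry

variable {V : Type*} [NormedAddCommGroup V] [InnerProductSpace ℝ V]

lemma angle_le_iff_norm_mul_cos_le_inner {u y : V} (hu : ‖u‖ = 1) (hy : y ≠ 0) {α : ℝ}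
    (hα₀ : 0 ≤ α) (hαπ : α ≤ π) : angle u y ≤ α ↔ ‖y‖ * cos α ≤ ⟪u, y⟫ := by
  rw [← cos_angle_mul_norm_mul_norm, hu, one_mul, mul_comm,
    mul_le_mul_iff_left₀ (norm_pos_iff.2 hy),
    strictAntiOn_cos.le_iff_ge ⟨hα₀, hαπ⟩ ⟨angle_nonneg u y, angle_le_pi u y⟩]

lemma norm_sub_inner_smul_eq_norm_mul_sin_angle {u : V} (hu : ‖u‖ = 1) (x : V) :
    ‖x - ⟪u, x⟫ • u‖ = ‖x‖ * sin (angle u x) := by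
  have hcos : cos (angle u x) * ‖x‖ = ⟪u, x⟫ := by
    simpa [hu] using cos_angle_mul_norm_mul_norm u x
  rw [← sq_eq_sq₀ (norm_nonneg _) (mul_nonneg (norm_nonneg x) (sin_angle_nonneg u x)),
    norm_sub_sq_real, real_inner_smul_right, norm_smul, real_inner_comm u x, mul_pow, mul_pow,
    sin_sq, norm_eq_abs, sq_abs, hu, ← hcos]
  ring

lemma infDist_ray_le_norm_mul_sin_angle {u x : V} (hu : ‖u‖ = 1) (h : angle u x ≤ π / 2) :
    Metric.infDist x {y | ∃ t : ℝ, 0 ≤ t ∧ y = t • u} ≤ ‖x‖ * sin (angle u x) := by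
  have hinner : 0 ≤ ⟪u, x⟫ := by
    rw [← cos_angle_mul_norm_mul_norm]
    have hcos : 0 ≤ cos (angle u x) := cos_nonneg_of_mem_Icc ⟨by linarith [angle_nonneg u x], h⟩
    positivity
  rw [← norm_sub_inner_smul_eq_norm_mul_sin_angle hu, ← dist_eq_norm]
  exact Metric.infDist_le_dist_of_mem ⟨_, hinner, rfl⟩

lemma norm_mul_sin_angle_le_norm_sub (x p : V) : ‖x‖ * sin (angle x p) ≤ ‖x - p‖ := by
  rcases eq_or_ne p 0 with rfl | hp
  · simp
  have hp' : 0 < ‖p‖ := norm_pos_iff.2 hp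
  refine le_of_mul_le_mul_right ?_ hp'
  calc ‖x‖ * sin (angle x p) * ‖p‖ = √(⟪x, x⟫ * ⟪p, p⟫ - ⟪x, p⟫ * ⟪x, p⟫) := by
        rw [← sin_angle_mul_norm_mul_norm]; ring
    _ ≤ √((‖x - p‖ * ‖p‖) ^ 2) := by
        gcongr
        rw [mul_pow, norm_sub_sq_real, real_inner_self_eq_norm_sq, real_inner_self_eq_norm_sq]
        nlinarith [sq_nonneg (‖p‖ ^ 2 - ⟪x, p⟫)]
    _ = ‖x - p‖ * ‖p‖ := sqrt_sq (by positivity)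

lemma angle_lt_pi_div_two_of_norm_sub_lt {x p : V} (h : ‖p - x‖ < ‖x‖) :
    angle x p < π / 2 := by
  have hx : 0 < ‖x‖ := (norm_nonneg _).trans_lt h
  have hinner : 0 < ⟪x, p⟫ := by
    have := norm_sub_sq_real p x
    rw [real_inner_comm] at this
    nlinarith [norm_nonneg (p - x), sq_nonneg ‖p‖]
  rw [angle, arccos_lt_pi_div_two]
  exact div_pos hinner (mul_pos hx (norm_pos_iff.2 (by rintro rfl; simp at hinner)))

lemma angle_le_of_norm_sub_le {x p : V} (hx : x ≠ 0) {ε : ℝ} (hε : ε < 1)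
    (h : ‖p - x‖ ≤ ε * ‖x‖) : angle x p ≤ π / 2 * ε := by
  have hx' : 0 < ‖x‖ := norm_pos_iff.2 hx
  have hsin : sin (angle x p) ≤ ε := by
    refine le_of_mul_le_mul_left ?_ hx'
    calc ‖x‖ * sin (angle x p) ≤ ‖x - p‖ := norm_mul_sin_angle_le_norm_sub x p
      _ ≤ ‖x‖ * ε := by rw [norm_sub_rev]; linarith
  have hjordan := mul_le_sin (angle_nonneg x p)
    (angle_lt_pi_div_two_of_norm_sub_lt (by nlinarith)).le
  calc angle x p = π / 2 * (2 / π * angle x p) := by field_simp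
    _ ≤ π / 2 * ε := by gcongr; linarith

end InnerProductGeometry

open InnerProductGeometry

theorem ball_in_quarter_cone_general (d : ℕ) (K α : ℝ) (hK : 0 < K) (hα : 0 < α)
    (hsmall : α * (1 + π * K / 2) < π / 4)
    (u x : EuclideanSpace ℝ (Fin d)) (hu : ‖u‖ = 1)
    (r : ℝ)
    (hx0 : x ≠ 0) (hxcone : ‖x‖ * Real.cos α ≤ ⟪u, x⟫)
    (hdist : r ≤ Metric.infDist x {y | ∃ t : ℝ, 0 ≤ t ∧ y = t • u}) :
    ∀ p ∈ Metric.closedBall x (K * r),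
      p ≠ 0 ∧ ‖p‖ * Real.cos (π / 4) ≤ ⟪u, p⟫ := by
  intro p hp
  have hKα : K * α < 1 := by nlinarith [mul_pos hα (mul_pos pi_pos hK)]
  have hαπ : α < π / 4 := by nlinarith [mul_pos hα (mul_pos pi_pos hK)]
  have hux : angle u x ≤ α :=
    (angle_le_iff_norm_mul_cos_le_inner hu hx0 hα.le (by linarith)).2 hxcone
  have hr : r ≤ α * ‖x‖ := calc
    r ≤ ‖x‖ * sin (angle u x) :=
      hdist.trans (infDist_ray_le_norm_mul_sin_angle hu (by linarith))
    _ ≤ ‖x‖ * α := by gcongr; exact (sin_le (angle_nonneg u x)).trans hux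
    _ = α * ‖x‖ := mul_comm _ _
  have hxp : angle x p ≤ π / 2 * (K * α) := by
    refine angle_le_of_norm_sub_le hx0 (by linarith) ?_
    rw [← dist_eq_norm, mul_assoc]
    exact (Metric.mem_closedBall.1 hp).trans (by gcongr)
  have hup : angle u p < π / 4 := by
    linarith [angle_le_angle_add_angle u x p]
  have hp0 : p ≠ 0 := by
    rintro rfl
    rw [angle_zero_right] at hup
    linarith [pi_pos]
  refine ⟨hp0, ?_⟩
  exact (angle_le_iff_norm_mul_cos_le_inner hu hp0 (by positivity) (by linarith)).1 hup.le

/-- Cone containment: if `B(x, r)` misses the ray `ℓ = {t • u : t ≥ 0}`, its center lies in the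
cone `C(u, α)` and `α(1 + πK/2) < π/4`, then `B(x, K·r)` is contained in the cone `C(u, π/4)`. -/
theorem ball_in_quarter_cone (d : ℕ) (K α : ℝ) (hK : 0 < K) (hα : 0 < α)
    (hsmall : α * (1 + π * K / 2) < π / 4)
    (u x : EuclideanSpace ℝ (Fin d)) (hu : ‖u‖ = 1)
    (r : ℝ) (hr : 0 ≤ r)
    (hx0 : x ≠ 0) (hxcone : ‖x‖ * Real.cos α ≤ ⟪u, x⟫)
    (hdist : r ≤ Metric.infDist x {y | ∃ t : ℝ, 0 ≤ t ∧ y = t • u}) :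
    ∀ p ∈ Metric.closedBall x (K * r),
      p ≠ 0 ∧ ‖p‖ * Real.cos (π / 4) ≤ ⟪u, p⟫ :=
  ball_in_quarter_cone_general d K α hK hα hsmall u x hu r hx0 hxcone hdist
end

section
/- Let F be a countable family of compact nonempty sets in ℝ^d with designated centers, and let x₀ be a point such that for every ε > 0 and every m ∈ ℕ the subfamily of sets with center within distance ε of x₀ cannot be pierced by m k-flats. Then there exists a sequence (B_n) of members of F whose centers converge to x₀ and such that {B_n : n ∈ ℕ} cannot be pierced by finitely many k-flats. -/
/-!
Along an ultrafilter, `k`-flats that all meet a fixed compact set converge (parametrize each by a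
point of the compact set and an orthonormal frame, a compact space) to a `k`-flat meeting every
compact set that the flats eventually meet. Induction on `m` turns this into the compactness
principle: a family of compact sets all of whose finite subfamilies can be pierced by `m` `k`-flats
can itself be pierced by `m` `k`-flats. So for each `m` some finite set `T m` of members with
centers within `1 / (m + 1)` of `x₀` cannot be pierced by `m` flats; enumerating all the `T m` in
one sequence gives centers tending to `x₀`, and a piercing of the whole sequence by `m` flats
would pierce `T m`.
-/

open Filter Set Topology Module
open scoped RealInnerProductSpace

theorem IsCompact.exists_tendsto_ultrafilter {X α : Type*} [TopologicalSpace X] {s : Set X}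
    (hs : IsCompact s) (u : Ultrafilter α) {f : α → X} (hf : ∀ᶠ a in u, f a ∈ s) :
    ∃ x ∈ s, Tendsto f u (𝓝 x) :=
  hs.ultrafilter_le_nhds' (u.map f) hf

section Frames

variable {V : Type*} [NormedAddCommGroup V] [InnerProductSpace ℝ V] {k : ℕ}

def frameFlat (p : V) (L : Fin k → V) : AffineSubspace ℝ V :=
  AffineSubspace.mk' p (Submodule.span ℝ (range L))

theorem mem_frameFlat_iff {p : V} {L : Fin k → V} (hL : Orthonormal ℝ L) {y : V} :
    y ∈ frameFlat p L ↔ p + ∑ l, ⟪y - p, L l⟫ • L l = y := by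
  rw [frameFlat, AffineSubspace.mem_mk', vsub_eq_sub, Submodule.mem_span_range_iff_exists_fun,
    ← eq_sub_iff_add_eq', eq_comm]
  constructor
  · rintro ⟨c, hc⟩
    have hcoeff : ∀ l, ⟪y - p, L l⟫ = c l := fun l => by
      rw [← hc, real_inner_comm, hL.inner_right_fintype]
    simp_rw [hcoeff, hc]
  · exact fun h => ⟨_, h.symm⟩

theorem finrank_direction_frameFlat {p : V} {L : Fin k → V} (hL : Orthonormal ℝ L) :
    finrank ℝ (frameFlat p L).direction = k := by
  rw [frameFlat, AffineSubspace.direction_mk', finrank_span_eq_card hL.linearIndependent,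
    Fintype.card_fin]

theorem exists_orthonormal_frameFlat_eq [FiniteDimensional ℝ V] {J : AffineSubspace ℝ V}
    (hJ : finrank ℝ J.direction = k) {x : V} (hx : x ∈ J) :
    ∃ L : Fin k → V, Orthonormal ℝ L ∧ J = frameFlat x L := by
  let b := (stdOrthonormalBasis ℝ J.direction).reindex (finCongr hJ)
  refine ⟨fun l => (b l : V), J.direction.subtypeₗᵢ.orthonormal_comp_iff.2 b.orthonormal, ?_⟩
  refine AffineSubspace.ext_of_direction_eq ?_ ⟨x, hx, AffineSubspace.self_mem_mk' _ _⟩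
  rw [frameFlat, AffineSubspace.direction_mk', range_comp', ← Submodule.coe_subtype,
    ← Submodule.map_span, ← b.coe_toBasis, b.toBasis.span_eq, Submodule.map_subtype_top]

theorem isCompact_setOf_orthonormal_s13 [ProperSpace V] :
    IsCompact {L : Fin k → V | Orthonormal ℝ L} := by
  refine Metric.isCompact_of_isClosed_isBounded ?_ ?_
  · simp only [orthonormal_iff_ite, ofPred_forall]
    exact isClosed_iInter fun i => isClosed_iInter fun j =>
      isClosed_eq (by fun_prop) continuous_const
  · refine (Metric.isBounded_closedBall (x := 0) (r := 1)).subset fun L hL => ?_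
    simp [Metric.mem_closedBall, pi_norm_le_iff_of_nonneg, hL.1]

theorem Ultrafilter.exists_limit_flat [FiniteDimensional ℝ V] {α : Type*} (u : Ultrafilter α)
    {K : Set V} (hK : IsCompact K) {J : α → AffineSubspace ℝ V}
    (hJ : ∀ a, finrank ℝ (J a).direction = k) (hJK : ∀ a, (K ∩ J a).Nonempty) :
    ∃ J₀ : AffineSubspace ℝ V, finrank ℝ J₀.direction = k ∧
      ∀ C : Set V, IsCompact C → (∀ᶠ a in u, (C ∩ J a).Nonempty) → (C ∩ J₀).Nonempty := by
  choose x hxK hxJ using hJK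
  choose L hL hJL using fun a => exists_orthonormal_frameFlat_eq (hJ a) (hxJ a)
  obtain ⟨⟨x₀, L₀⟩, ⟨-, hL₀⟩, hlim⟩ :=
    (hK.prod isCompact_setOf_orthonormal_s13).exists_tendsto_ultrafilter u
      (f := fun a => (x a, L a)) (.of_forall fun a => ⟨hxK a, hL a⟩)
  refine ⟨frameFlat x₀ L₀, finrank_direction_frameFlat hL₀, fun C hC hCJ => ?_⟩
  obtain ⟨y, hy⟩ := hCJ.choice
  obtain ⟨y₀, hy₀C, hylim⟩ := hC.exists_tendsto_ultrafilter u (hy.mono fun a h => h.1)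
  refine ⟨y₀, hy₀C, (mem_frameFlat_iff hL₀).2 ?_⟩
  have hclosed :
      IsClosed {q : V × V × (Fin k → V) | q.2.1 + ∑ l, ⟪q.1 - q.2.1, q.2.2 l⟫ • q.2.2 l = q.1} :=
    isClosed_eq (by fun_prop) continuous_fst
  refine hclosed.mem_of_tendsto (hylim.prodMk_nhds hlim) ?_
  filter_upwards [hy] with a ha
  exact (mem_frameFlat_iff (hL a)).1 (hJL a ▸ ha.2)

end Frames

section Piercing

variable {d k m : ℕ} {ι : Type*}

def Pierceable (k m : ℕ) (B : ι → Set (EuclideanSpace ℝ (Fin d))) (S : Set ι) : Prop :=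
  ∃ P : Set (AffineSubspace ℝ (EuclideanSpace ℝ (Fin d))),
    P.Finite ∧ P.ncard ≤ m ∧ (∀ J ∈ P, IsKFlat d k J) ∧ ∀ i ∈ S, ∃ J ∈ P, (B i ∩ J).Nonempty

variable {B : ι → Set (EuclideanSpace ℝ (Fin d))}

theorem pierceable_empty : Pierceable k m B ∅ :=
  ⟨∅, finite_empty, by simp, by simp, by simp⟩

theorem pierceable_zero_iff {S : Set ι} : Pierceable k 0 B S ↔ S = ∅ := by
  refine ⟨?_, fun h => h ▸ pierceable_empty⟩
  rintro ⟨P, hPfin, hP0, -, hP⟩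
  refine eq_empty_of_forall_notMem fun i hi => ?_
  obtain ⟨J, hJ, -⟩ := hP i hi
  rw [(ncard_eq_zero hPfin).1 (Nat.le_zero.1 hP0)] at hJ
  exact hJ

theorem pierceable_succ_of_forall_finset (hB : ∀ i, IsCompact (B i))
    (ih : ∀ S : Set ι, (∀ F : Finset ι, Pierceable k m B (S ∩ F)) → Pierceable k m B S)
    {S : Set ι} {i₀ : ι} (hi₀ : i₀ ∈ S) (h : ∀ F : Finset ι, Pierceable k (m + 1) B (S ∩ F)) :
    Pierceable k (m + 1) B S := by
  classical
  choose P hPfin hPcard hPk hPS using fun F : Finset ι => h (insert i₀ F)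
  choose J hJP hJi₀ using fun F => hPS F i₀ ⟨hi₀, by simp⟩
  let u := Ultrafilter.of (atTop : Filter (Finset ι))
  obtain ⟨J₀, hJ₀k, hJ₀⟩ := u.exists_limit_flat (hB i₀) (fun F => (hPk F _ (hJP F)).2) hJi₀
  -- The sets met by the distinguished flat `J F` for `u`-almost all `F` are met by the limit flat
  -- `J₀`; each of the others is missed by `J F` for `u`-almost all `F`, so on any finite set of
  -- them some `P F \ {J F}` does the piercing with `m` flats.
  set A := {i | ∀ᶠ F in u, (B i ∩ J F).Nonempty}
  have hA : Pierceable k m B (S \ A) := by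
    refine ih _ fun G => ?_
    have hev : ∀ᶠ F in u, G ≤ F ∧ ∀ i ∈ (G : Set ι) \ A, ¬ (B i ∩ J F).Nonempty :=
      ((eventually_ge_atTop G).filter_mono (Ultrafilter.of_le _)).and
        ((eventually_all_finite G.finite_toSet.sdiff).2 fun i hi =>
          Ultrafilter.eventually_not.2 hi.2)
    obtain ⟨F, hGF, hFA⟩ := hev.exists
    refine ⟨P F \ {J F}, (hPfin F).sdiff, ?_, fun J' hJ' => hPk F J' hJ'.1, ?_⟩
    · rw [ncard_sdiff_singleton_of_mem (hJP F)]
      exact Nat.sub_le_of_le_add (hPcard F)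
    · rintro i ⟨⟨hiS, hiA⟩, hiG⟩
      obtain ⟨J', hJ', hiJ'⟩ :=
        hPS F i ⟨hiS, Finset.mem_coe.2 (Finset.mem_insert_of_mem (hGF hiG))⟩
      refine ⟨J', ⟨hJ', fun hJ'F => hFA i ⟨hiG, hiA⟩ ?_⟩, hiJ'⟩
      rwa [← mem_singleton_iff.1 hJ'F]
  obtain ⟨P', hP'fin, hP'card, hP'k, hP'⟩ := hA
  refine ⟨insert J₀ P', hP'fin.insert J₀, (ncard_insert_le _ _).trans (by omega), ?_, ?_⟩
  · refine forall_mem_insert.2 ⟨⟨?_, hJ₀k⟩, hP'k⟩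
    exact (hJ₀ _ (hB i₀) (.of_forall hJi₀)).mono inter_subset_right
  · intro i hi
    by_cases hiA : i ∈ A
    · exact ⟨J₀, mem_insert _ _, hJ₀ _ (hB i) hiA⟩
    · obtain ⟨J', hJ', hiJ'⟩ := hP' i ⟨hi, hiA⟩
      exact ⟨J', mem_insert_of_mem _ hJ', hiJ'⟩

theorem pierceable_of_forall_finset (hB : ∀ i, IsCompact (B i)) {S : Set ι}
    (h : ∀ F : Finset ι, Pierceable k m B (S ∩ F)) : Pierceable k m B S := by
  induction m generalizing S with
  | zero =>
    simp only [pierceable_zero_iff] at h ⊢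
    exact eq_empty_of_forall_notMem fun i hi =>
      eq_empty_iff_forall_notMem.1 (h {i}) i ⟨hi, Finset.mem_coe.2 (Finset.mem_singleton_self i)⟩
  | succ m ih =>
    rcases S.eq_empty_or_nonempty with rfl | ⟨i₀, hi₀⟩
    · exact pierceable_empty
    · exact pierceable_succ_of_forall_finset hB (fun _ => ih) hi₀ h

end Piercing

theorem exists_enumeration_of_finite_nonempty {α : Type*} (T : ℕ → Set α)
    (hfin : ∀ m, (T m).Finite) (hne : ∀ m, (T m).Nonempty) :
    ∃ (g : ℕ → α) (idx : ℕ → ℕ), Tendsto idx atTop atTop ∧ (∀ n, g n ∈ T (idx n)) ∧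
      ∀ m, T m ⊆ range g := by
  have := fun m => (hfin m).to_subtype
  have : Infinite (Σ m, T m) :=
    .of_injective (fun m => ⟨m, (hne m).some, (hne m).some_mem⟩) fun _ _ h =>
      (Sigma.mk.inj_iff.1 h).1
  obtain ⟨e⟩ : Nonempty (ℕ ≃ Σ m, T m) := ⟨(nonempty_denumerable _).some.eqv.symm⟩
  refine ⟨fun n => (e n).2, fun n => (e n).1, ?_, fun n => (e n).2.2, fun m i hi => ?_⟩
  · have hfst : Tendsto (Sigma.fst : (Σ m, T m) → ℕ) cofinite atTop := by
      refine tendsto_atTop.2 fun m => eventually_cofinite.2 ?_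
      simp only [not_le]
      refine (finite_Iio m).preimage' fun j _ => ?_
      refine (finite_range fun t : T j => (⟨j, t⟩ : Σ m, T m)).subset ?_
      rintro ⟨j', t⟩ rfl
      exact ⟨t, rfl⟩
    exact hfst.comp (Nat.cofinite_eq_atTop ▸ e.injective.tendsto_cofinite)
  · exact ⟨e.symm ⟨m, i, hi⟩, by dsimp only; rw [Equiv.apply_symm_apply]⟩

theorem strong_point_gives_unpierceable_sequence_general (d k : ℕ)
    (B : ℕ → Set (EuclideanSpace ℝ (Fin d))) (ctr : ℕ → EuclideanSpace ℝ (Fin d))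
    (hcomp : ∀ n, IsCompact (B n))
    (x₀ : EuclideanSpace ℝ (Fin d))
    (hstrong : ∀ ε > 0, ∀ m : ℕ,
      ¬ ∃ P : Set (AffineSubspace ℝ (EuclideanSpace ℝ (Fin d))),
        P.Finite ∧ P.ncard ≤ m ∧ (∀ J ∈ P, IsKFlat d k J) ∧
        ∀ n, dist (ctr n) x₀ < ε →
          ∃ J ∈ P, (B n ∩ (J : Set (EuclideanSpace ℝ (Fin d)))).Nonempty) :
    ∃ g : ℕ → ℕ,
      Filter.Tendsto (fun n => ctr (g n)) Filter.atTop (nhds x₀) ∧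
      ¬ ∃ P : Set (AffineSubspace ℝ (EuclideanSpace ℝ (Fin d))),
        P.Finite ∧ (∀ J ∈ P, IsKFlat d k J) ∧
        ∀ n, ∃ J ∈ P, (B (g n) ∩ (J : Set (EuclideanSpace ℝ (Fin d)))).Nonempty := by
  have hwitness : ∀ m : ℕ, ∃ T ⊆ {n | dist (ctr n) x₀ < 1 / (m + 1)}, T.Finite ∧
      ¬ Pierceable k m B T := by
    intro m
    by_contra! h
    exact hstrong _ Nat.one_div_pos_of_nat m <| pierceable_of_forall_finset hcomp fun F =>
      h _ inter_subset_left (F.finite_toSet.inter_of_right _)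
  choose T hTS hTfin hT using hwitness
  have hTne : ∀ m, (T m).Nonempty := fun m =>
    nonempty_iff_ne_empty.2 fun hm => hT m (hm ▸ pierceable_empty)
  obtain ⟨g, idx, hidx, hgT, hTg⟩ := exists_enumeration_of_finite_nonempty T hTfin hTne
  refine ⟨g, tendsto_iff_dist_tendsto_zero.2 ?_, fun ⟨P, hPfin, hPk, hPg⟩ => ?_⟩
  · exact squeeze_zero (fun _ => dist_nonneg) (fun n => (hTS _ (hgT n)).le)
      (tendsto_one_div_add_atTop_nhds_zero_nat.comp hidx)
  · refine hT P.ncard ⟨P, hPfin, le_rfl, hPk, fun i hi => ?_⟩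
    obtain ⟨n, rfl⟩ := hTg _ hi
    exact hPg n

/-- At a strong point `x₀`, one can extract a sequence of members whose centers converge to
`x₀` and which cannot be pierced by finitely many `k`-flats. -/
theorem strong_point_gives_unpierceable_sequence (d k : ℕ)
    (B : ℕ → Set (EuclideanSpace ℝ (Fin d))) (ctr : ℕ → EuclideanSpace ℝ (Fin d))
    (hcomp : ∀ n, IsCompact (B n)) (hne : ∀ n, (B n).Nonempty)
    (x₀ : EuclideanSpace ℝ (Fin d))
    (hstrong : ∀ ε > 0, ∀ m : ℕ,
      ¬ ∃ P : Set (AffineSubspace ℝ (EuclideanSpace ℝ (Fin d))),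
        P.Finite ∧ P.ncard ≤ m ∧ (∀ J ∈ P, IsKFlat d k J) ∧
        ∀ n, dist (ctr n) x₀ < ε →
          ∃ J ∈ P, (B n ∩ (J : Set (EuclideanSpace ℝ (Fin d)))).Nonempty) :
    ∃ g : ℕ → ℕ,
      Filter.Tendsto (fun n => ctr (g n)) Filter.atTop (nhds x₀) ∧
      ¬ ∃ P : Set (AffineSubspace ℝ (EuclideanSpace ℝ (Fin d))),
        P.Finite ∧ (∀ J ∈ P, IsKFlat d k J) ∧
        ∀ n, ∃ J ∈ P, (B (g n) ∩ (J : Set (EuclideanSpace ℝ (Fin d)))).Nonempty :=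
  strong_point_gives_unpierceable_sequence_general d k B ctr hcomp x₀ hstrong
end

section
/- Let ℓ be the negative d-th-axis ray in ℝ^d with unit direction u = (0,…,0,−1), let 0 < α with α(1 + πK/2) < π/4, and consider the central projection π from the origin onto the hyperplane {x : x_d = −1}. If D₁ = B(x, r) and D₂ = B(x, K·r) are concentric balls with r ≤ dist(x, ℓ) and x in the cone C(u, α), then diam(π(D₂)) ≤ √2 · K · diam(π(D₁)). -/
open scoped RealInnerProductSpace
open Real

/-- Central projection from the origin onto the hyperplane `{x : x_d = −1}` in `ℝ^(d+1)`. -/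
noncomputable def centralProj (d : ℕ) :
    EuclideanSpace ℝ (Fin (d + 1)) → EuclideanSpace ℝ (Fin (d + 1)) :=
  fun y => (-(y (Fin.last d)))⁻¹ • y

/-!
Write `P` for the central projection, `a = -x_d` for the depth of `x` below the origin and `h`
for its distance from the axis. The cone condition gives `h ≤ a tan α`, and `tan α ≤ 4α/π`
(convexity of `tan`) together with `√2 ≤ π/2` turns the smallness assumption into
`h + √2 K r ≤ a`. Under this condition every point `y` of `B(x, R)`, `R = K r`, projects within
`√2 R / a` of `P x`: if `v` and `w` are the vertical and horizontal parts of `y - x` and `x'` is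
the horizontal part of `x`, then `P y - P x = (a w + v x') / (a (a - v))`. Conversely, the points
`x ± r e`, with `e` the horizontal unit vector pointing away from the axis, lie in the slice at
depth `a`, on which `P` is a homothety of ratio `1/a`, so `diam P(B(x, r)) ≥ 2r/a`.
-/

theorem convexOn_tan : ConvexOn ℝ (Set.Ico 0 (π / 2)) tan := by
  have hcos : ∀ y ∈ Set.Ico 0 (π / 2), 0 < cos y := fun y hy =>
    cos_pos_of_mem_Ioo ⟨by linarith [hy.1, pi_pos], hy.2⟩
  apply MonotoneOn.convexOn_of_deriv (convex_Ico _ _)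
  · exact continuousOn_tan.mono fun y hy => (hcos y hy).ne'
  · rw [interior_Ico]
    exact fun y hy =>
      (differentiableAt_tan.2 (hcos y (Set.Ioo_subset_Ico_self hy)).ne').differentiableWithinAt
  · rw [interior_Ico]
    intro y hy z hz hyz
    have hcz := hcos z (Set.Ioo_subset_Ico_self hz)
    rw [deriv_tan, deriv_tan]
    gcongr
    exact cos_le_cos_of_nonneg_of_le_pi hy.1.le (by linarith [hz.2, pi_pos]) hyz

theorem tan_le_four_div_pi_mul {x : ℝ} (h0 : 0 ≤ x) (h1 : x ≤ π / 4) :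
    tan x ≤ 4 / π * x := by
  have hb : 4 / π * x ≤ 1 := by rw [div_mul_eq_mul_div, div_le_one pi_pos]; linarith
  have key := convexOn_tan.2 (⟨le_rfl, pi_div_two_pos⟩ : (0 : ℝ) ∈ Set.Ico 0 (π / 2))
    (⟨by positivity, by linarith [pi_pos]⟩ : π / 4 ∈ Set.Ico 0 (π / 2))
    (sub_nonneg.2 hb) (by positivity : 0 ≤ 4 / π * x) (sub_add_cancel _ _)
  have hx : 4 / π * x * (π / 4) = x := by field_simp
  simpa [hx, tan_pi_div_four] using key

theorem tan_mul_one_add_sqrt_two_mul_le_one {α K : ℝ} (hα : 0 ≤ α) (hK : 0 ≤ K)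
    (hsmall : α * (1 + π * K / 2) < π / 4) : tan α * (1 + √2 * K) ≤ 1 := by
  have hαK : α * (1 + √2 * K) ≤ α * (1 + π * K / 2) := by
    have : √2 ≤ π / 2 := by linarith [sqrt_two_lt_three_halves, pi_gt_three]
    gcongr
    nlinarith
  have hα4 : α ≤ π / 4 := by nlinarith [mul_nonneg hα (mul_nonneg pi_pos.le hK)]
  calc tan α * (1 + √2 * K) ≤ 4 / π * α * (1 + √2 * K) := by
        gcongr; exact tan_le_four_div_pi_mul hα hα4
    _ ≤ 4 / π * (π / 4) := by rw [mul_assoc]; gcongr; linarith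
    _ = 1 := by field_simp

section

variable {d : ℕ}

noncomputable def horizPart (v : EuclideanSpace ℝ (Fin (d + 1))) :
    EuclideanSpace ℝ (Fin (d + 1)) :=
  v - v (Fin.last d) • EuclideanSpace.single (Fin.last d) 1

@[simp]
theorem horizPart_apply_last (v : EuclideanSpace ℝ (Fin (d + 1))) :
    horizPart v (Fin.last d) = 0 := by
  simp [horizPart]

theorem norm_horizPart_sq_add_sq (v : EuclideanSpace ℝ (Fin (d + 1))) :
    ‖horizPart v‖ ^ 2 + v (Fin.last d) ^ 2 = ‖v‖ ^ 2 := by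
  have horth : ⟪horizPart v, v (Fin.last d) • EuclideanSpace.single (Fin.last d) 1⟫ = 0 := by
    simp [real_inner_smul_right, EuclideanSpace.inner_single_right]
  have := norm_add_sq_eq_norm_sq_add_norm_sq_of_inner_eq_zero _ _ horth
  rw [horizPart, sub_add_cancel, norm_smul, PiLp.norm_single, norm_one, mul_one, norm_eq_abs,
    abs_mul_abs_self] at this
  simp only [sq]
  exact this.symm

theorem centralProj_sub_centralProj {x y : EuclideanSpace ℝ (Fin (d + 1))}
    (hx : x (Fin.last d) ≠ 0) (hy : y (Fin.last d) ≠ 0) :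
    centralProj d y - centralProj d x = (x (Fin.last d) * y (Fin.last d))⁻¹ •
      ((-x (Fin.last d)) • horizPart (y - x) + (y - x) (Fin.last d) • horizPart x) := by
  simp only [centralProj, horizPart, PiLp.sub_apply]
  match_scalars <;> field_simp <;> ring

theorem continuousOn_centralProj : ContinuousOn (centralProj d) {y | y (Fin.last d) ≠ 0} :=
  ((continuous_apply (Fin.last d)).comp (PiLp.continuous_ofLp 2 _)).neg.continuousOn.inv₀
    (fun _ hy => neg_ne_zero.2 hy) |>.smul continuousOn_id

theorem add_abs_mul_le_sqrt_two_mul {a h R v w : ℝ} (hh : 0 ≤ h) (hvw : v ^ 2 + w ^ 2 ≤ R ^ 2)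
    (hR : 0 ≤ R) (ha : h + √2 * R ≤ a) :
    a * w + |v| * h ≤ √2 * R * (a - v) := by
  -- `w + |v| ≤ √2 R` is Cauchy–Schwarz for `(1, 1)` and `(w, |v|)`
  have hsum : w + |v| ≤ √2 * R := by
    apply abs_le_of_sq_le_sq' _ (by positivity) |>.2
    rw [mul_pow, sq_sqrt zero_le_two]
    nlinarith [sq_abs v, sq_nonneg (w - |v|)]
  have ha0 : 0 ≤ a := by nlinarith [sqrt_nonneg 2]
  nlinarith [abs_nonneg v, le_abs_self v, mul_le_mul_of_nonneg_left hsum ha0,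
    mul_le_mul_of_nonneg_left (le_abs_self v) (mul_nonneg (sqrt_nonneg 2) hR),
    mul_le_mul_of_nonneg_left (show h ≤ a - √2 * R by linarith) (abs_nonneg v)]

theorem dist_centralProj_le {x y : EuclideanSpace ℝ (Fin (d + 1))} {R : ℝ} (hR : 0 < R)
    (hx : ‖horizPart x‖ + √2 * R ≤ -x (Fin.last d)) (hy : dist y x ≤ R) :
    dist (centralProj d y) (centralProj d x) ≤ √2 * R / -x (Fin.last d) := by
  set a := -x (Fin.last d)
  set v := (y - x) (Fin.last d)
  have hv : |v| ≤ R := by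
    simpa only [norm_eq_abs] using (PiLp.norm_apply_le (y - x) (Fin.last d)).trans
      (dist_eq_norm y x ▸ hy)
  have hvw : v ^ 2 + ‖horizPart (y - x)‖ ^ 2 ≤ R ^ 2 := by
    rw [add_comm, norm_horizPart_sq_add_sq, ← dist_eq_norm]
    exact pow_le_pow_left₀ dist_nonneg hy 2
  have ha : 0 < a := by nlinarith [norm_nonneg (horizPart x), mul_pos (sqrt_pos.2 two_pos) hR]
  have hav : 0 < a - v := by
    nlinarith [le_abs_self v, norm_nonneg (horizPart x), one_lt_sqrt_two]
  have hprod : x (Fin.last d) * y (Fin.last d) = a * (a - v) := by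
    simp only [a, v, PiLp.sub_apply]; ring
  rw [dist_eq_norm, centralProj_sub_centralProj (neg_ne_zero.1 ha.ne')
    (right_ne_zero_of_mul (hprod ▸ (mul_pos ha hav).ne')), hprod]
  calc ‖(a * (a - v))⁻¹ • (a • horizPart (y - x) + v • horizPart x)‖
      ≤ (a * (a - v))⁻¹ * (a * ‖horizPart (y - x)‖ + |v| * ‖horizPart x‖) := by
        rw [norm_smul, norm_inv, norm_mul, norm_of_nonneg ha.le, norm_of_nonneg hav.le]
        gcongr
        refine (norm_add_le _ _).trans_eq ?_
        rw [norm_smul, norm_smul, norm_of_nonneg ha.le, norm_eq_abs]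
    _ ≤ (a * (a - v))⁻¹ * (√2 * R * (a - v)) := by
        gcongr
        exact add_abs_mul_le_sqrt_two_mul (norm_nonneg _) hvw hR.le hx
    _ = √2 * R / a := by field_simp

theorem diam_image_centralProj_closedBall_le {x : EuclideanSpace ℝ (Fin (d + 1))} {R : ℝ}
    (hR : 0 < R) (hx : ‖horizPart x‖ + √2 * R ≤ -x (Fin.last d)) :
    Metric.diam (centralProj d '' Metric.closedBall x R) ≤ 2 * (√2 * R / -x (Fin.last d)) := by
  have ha : 0 < -x (Fin.last d) := by
    nlinarith [norm_nonneg (horizPart x), mul_pos (sqrt_pos.2 two_pos) hR]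
  refine Metric.diam_le_of_subset_closedBall (x := centralProj d x) (by positivity) ?_
  rintro _ ⟨y, hy, rfl⟩
  exact dist_centralProj_le hR hx hy

theorem dist_centralProj_of_apply_last_eq {y z : EuclideanSpace ℝ (Fin (d + 1))}
    (hyz : y (Fin.last d) = z (Fin.last d)) :
    dist (centralProj d y) (centralProj d z) = dist y z / |y (Fin.last d)| := by
  rw [dist_eq_norm, dist_eq_norm, centralProj, centralProj, ← hyz, ← smul_sub, norm_smul,
    norm_inv, norm_neg, norm_eq_abs, inv_mul_eq_div]

theorem isBounded_image_centralProj_closedBall {x : EuclideanSpace ℝ (Fin (d + 1))} {r : ℝ}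
    (hr : r < -x (Fin.last d)) :
    Bornology.IsBounded (centralProj d '' Metric.closedBall x r) := by
  refine ((isCompact_closedBall x r).image_of_continuousOn
    (continuousOn_centralProj.mono fun y hy => ?_)).isBounded
  have hyx := (PiLp.dist_apply_le y x (Fin.last d)).trans (Metric.mem_closedBall.1 hy)
  rw [dist_eq_norm, norm_eq_abs] at hyx
  exact ne_of_lt (by linarith [le_abs_self (y (Fin.last d) - x (Fin.last d))])

theorem le_diam_image_centralProj_closedBall {x e : EuclideanSpace ℝ (Fin (d + 1))} {r : ℝ}
    (he : ‖e‖ = 1) (he_last : e (Fin.last d) = 0) (hr0 : 0 ≤ r) (hr : r < -x (Fin.last d)) :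
    2 * r / -x (Fin.last d) ≤ Metric.diam (centralProj d '' Metric.closedBall x r) := by
  have hmem : ∀ s : ℝ, |s| ≤ r → x + s • e ∈ Metric.closedBall x r := fun s hs => by
    simpa [norm_smul, he] using hs
  have hsub : x + r • e - (x + (-r) • e) = (2 * r) • e := by module
  have hdist : dist (centralProj d (x + r • e)) (centralProj d (x + (-r) • e)) =
      2 * r / -x (Fin.last d) := by
    rw [dist_centralProj_of_apply_last_eq (by simp [he_last]), dist_eq_norm, hsub, norm_smul, he,
      PiLp.add_apply, PiLp.smul_apply, he_last, smul_zero, add_zero, abs_of_neg (by linarith),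
      norm_of_nonneg (by positivity), mul_one]
  rw [← hdist]
  exact Metric.dist_le_diam_of_mem (isBounded_image_centralProj_closedBall hr)
    ⟨_, hmem r (abs_of_nonneg hr0).le, rfl⟩
    ⟨_, hmem (-r) (by rw [abs_neg, abs_of_nonneg hr0]), rfl⟩

theorem infDist_ray_le_norm_horizPart {x : EuclideanSpace ℝ (Fin (d + 1))}
    (hx : x (Fin.last d) ≤ 0) :
    Metric.infDist x
        {y | ∃ t : ℝ, 0 ≤ t ∧ y = t • -EuclideanSpace.single (Fin.last d) (1 : ℝ)} ≤
      ‖horizPart x‖ := by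
  calc _ ≤ dist x (-x (Fin.last d) • -EuclideanSpace.single (Fin.last d) 1) :=
        Metric.infDist_le_dist_of_mem (by exact ⟨_, neg_nonneg.2 hx, rfl⟩)
    _ = ‖horizPart x‖ := by rw [dist_eq_norm, horizPart, smul_neg, neg_smul, neg_neg]

theorem norm_horizPart_le_mul_tan {x : EuclideanSpace ℝ (Fin (d + 1))} {α : ℝ} (hα : 0 ≤ α)
    (hα' : α < π / 2) (hx : ‖x‖ * cos α ≤ -x (Fin.last d)) :
    ‖horizPart x‖ ≤ -x (Fin.last d) * tan α := by
  have hc : 0 < cos α := cos_pos_of_mem_Ioo ⟨by linarith [pi_pos], hα'⟩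
  have hs : 0 ≤ sin α := sin_nonneg_of_nonneg_of_le_pi hα (by linarith [pi_pos])
  have ha : 0 ≤ -x (Fin.last d) := (mul_nonneg (norm_nonneg x) hc.le).trans hx
  rw [tan_eq_sin_div_cos, mul_div_assoc', le_div_iff₀ hc,
    ← pow_le_pow_iff_left₀ (by positivity) (by positivity) two_ne_zero]
  nlinarith [norm_horizPart_sq_add_sq x, sin_sq_add_cos_sq α,
    mul_self_le_mul_self (mul_nonneg (norm_nonneg x) hc.le) hx]

theorem norm_horizPart_add_sqrt_two_mul_le {x : EuclideanSpace ℝ (Fin (d + 1))} {α K r : ℝ}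
    (hα : 0 ≤ α) (hK : 0 ≤ K) (hsmall : α * (1 + π * K / 2) < π / 4)
    (hx : ‖x‖ * cos α ≤ -x (Fin.last d)) (hr : r ≤ ‖horizPart x‖) :
    ‖horizPart x‖ + √2 * (K * r) ≤ -x (Fin.last d) := by
  have hα2 : α < π / 2 := by nlinarith [mul_nonneg (mul_nonneg hα pi_pos.le) hK, pi_pos]
  have ha : 0 ≤ -x (Fin.last d) :=
    (mul_nonneg (norm_nonneg x) (cos_nonneg_of_mem_Icc ⟨by linarith, hα2.le⟩)).trans hx
  calc ‖horizPart x‖ + √2 * (K * r) ≤ ‖horizPart x‖ * (1 + √2 * K) := by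
        nlinarith [mul_le_mul_of_nonneg_left hr (mul_nonneg (sqrt_nonneg 2) hK)]
    _ ≤ -x (Fin.last d) * tan α * (1 + √2 * K) := by
        gcongr
        exact norm_horizPart_le_mul_tan hα hα2 hx
    _ ≤ -x (Fin.last d) := by
        rw [mul_assoc]
        exact mul_le_of_le_one_right ha (tan_mul_one_add_sqrt_two_mul_le_one hα hK hsmall)

end

theorem central_projection_diam_ratio_general (d : ℕ) (K α r : ℝ)
    (hK : 0 < K) (hα : 0 < α) (hr : 0 < r)
    (hsmall : α * (1 + π * K / 2) < π / 4)
    (u : EuclideanSpace ℝ (Fin (d + 1)))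
    (hu : u = -(EuclideanSpace.single (Fin.last d) (1 : ℝ)))
    (x : EuclideanSpace ℝ (Fin (d + 1)))
    (hxcone : ‖x‖ * Real.cos α ≤ ⟪u, x⟫)
    (hmiss : r ≤ Metric.infDist x {y | ∃ t : ℝ, 0 ≤ t ∧ y = t • u}) :
    Metric.diam (centralProj d '' Metric.closedBall x (K * r)) ≤
      Real.sqrt 2 * K * Metric.diam (centralProj d '' Metric.closedBall x r) := by
  subst hu
  set a := -x (Fin.last d)
  have hcone : ‖x‖ * cos α ≤ a := by
    simpa [inner_neg_left, EuclideanSpace.inner_single_left] using hxcone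
  have ha : 0 ≤ a := (mul_nonneg (norm_nonneg x) (cos_nonneg_of_mem_Icc
    ⟨by linarith [pi_pos], by nlinarith [mul_pos (mul_pos hα pi_pos) hK, pi_pos]⟩)).trans hcone
  have hrh : r ≤ ‖horizPart x‖ := hmiss.trans (infDist_ray_le_norm_horizPart (by linarith))
  have hfar : ‖horizPart x‖ + √2 * (K * r) ≤ a :=
    norm_horizPart_add_sqrt_two_mul_le hα.le hK.le hsmall hcone hrh
  have hra : r < a := by nlinarith [mul_pos (sqrt_pos.2 two_pos) (mul_pos hK hr)]
  calc Metric.diam (centralProj d '' Metric.closedBall x (K * r))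
      ≤ 2 * (√2 * (K * r) / a) := diam_image_centralProj_closedBall_le (mul_pos hK hr) hfar
    _ = √2 * K * (2 * r / a) := by ring
    _ ≤ √2 * K * Metric.diam (centralProj d '' Metric.closedBall x r) := by
        gcongr
        have hh : horizPart x ≠ 0 := norm_pos_iff.1 (hr.trans_le hrh)
        exact le_diam_image_centralProj_closedBall (e := ‖horizPart x‖⁻¹ • horizPart x)
          (norm_smul_inv_norm hh) (by simp) hr.le hra

/-- Under central projection from the origin onto the hyperplane `{x_d = −1}`, the projection of
the concentric ball `B(x, K·r)` has diameter at most `√2·K` times that of the projection of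
`B(x, r)`, provided `B(x, r)` misses the negative `d`-axis ray `ℓ` and `x` lies in the cone of
aperture `α` about `ℓ`, with `α(1 + πK/2) < π/4`. -/
theorem central_projection_diam_ratio (d : ℕ) (K α r : ℝ)
    (hK : 0 < K) (hα : 0 < α) (hr : 0 < r)
    (hsmall : α * (1 + π * K / 2) < π / 4)
    (u : EuclideanSpace ℝ (Fin (d + 1)))
    (hu : u = -(EuclideanSpace.single (Fin.last d) (1 : ℝ)))
    (x : EuclideanSpace ℝ (Fin (d + 1))) (hx0 : x ≠ 0)
    (hxcone : ‖x‖ * Real.cos α ≤ ⟪u, x⟫)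
    (hmiss : r ≤ Metric.infDist x {y | ∃ t : ℝ, 0 ≤ t ∧ y = t • u}) :
    Metric.diam (centralProj d '' Metric.closedBall x (K * r)) ≤
      Real.sqrt 2 * K * Metric.diam (centralProj d '' Metric.closedBall x r) :=
  central_projection_diam_ratio_general d K α r hK hα hr hsmall u hu x hxcone hmiss
end

section
/- Let F be a family of closed balls in the plane, each of positive radius, with the property that among every countably infinite subfamily of F, some 3 balls can be pierced by one line. Then F can be pierced by finitely many lines. -/
/-!
Suppose `F` has no finite line transversal. The subfamilies of `F` missing finitely many given
lines then form a filter base; fix an ultrafilter `U` refining it, so that `U`-almost every disc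
misses any prescribed line. Encode an affine function `x ↦ ⟪n, x⟫ + k` as the vector `(n, k)` of a
three-dimensional Euclidean space. A disc missing a line lies on one side of it, so for every
`L ≠ 0` either `L` or `-L` is positive on `U`-almost every disc. Taking limits on the unit sphere
(the limit point of the discs in the projective plane, then the direction from which they approach
it) produces `f, g, h` such that `g`, `h`, `ε • h - g` and `f - c • h` are all positive in this
sense, for every `ε > 0` and every `c`. In the projective chart `(S, T) = (f / h, g / h)`,
`U`-almost every disc thus lies in `{S > c, 0 < T < ε}`. Choosing discs one after another along
`U`, each new disc lies beyond the point where any line through two earlier discs crosses `T = 0`,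
so no line meets three of them, and these discs form an infinite subfamily violating the
`(ℵ₀, 3)`-property.
-/

open Metric Set Filter Module Topology
open scoped RealInnerProductSpace

theorem Filter.exists_seq_of_eventually_triple {α : Type*} {l : Filter α} [l.NeBot]
    {R : α → α → α → Prop} (h : ∀ᶠ a in l, ∀ᶠ b in l, ∀ᶠ c in l, R a b c) :
    ∃ s : ℕ → α, ∀ i j k, i < j → j < k → R (s i) (s j) (s k) := by
  -- each chosen point `y` carries the set of admissible later points for the pairs ending at `y`
  obtain ⟨s, -, hs⟩ := exists_seq_of_forall_finset_exists
    (fun p : α × Set α => (∀ᶠ b in l, ∀ᶠ c in l, R p.1 b c) ∧ p.2 ∈ l)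
    (fun p p' => p'.1 ∈ p.2 ∧ ∀ c ∈ p'.2, R p.1 p'.1 c) fun t ht => by
      obtain ⟨y, hy, hyt⟩ := (h.and ((eventually_all_finset t).2 fun p hp =>
        (show ∀ᶠ y in l, y ∈ p.2 from (ht p hp).2).and (ht p hp).1)).exists
      exact ⟨(y, {c | ∀ p ∈ t, R p.1 y c}),
        ⟨hy, (eventually_all_finset t).2 fun p hp => (hyt p hp).2⟩,
        fun p hp => ⟨(hyt p hp).1, fun c hc => hc p hp⟩⟩
  exact ⟨fun n => (s n).1, fun i j k hij hjk => (hs i j hij).2 _ (hs j k hjk).1⟩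

section Lexicographic

variable {α V : Type*} [NormedAddCommGroup V] [InnerProductSpace ℝ V] [FiniteDimensional ℝ V]

theorem exists_ne_zero_forall_inner_eq_zero (s : Finset V) (hs : s.card < finrank ℝ V) :
    ∃ g : V, g ≠ 0 ∧ ∀ v ∈ s, ⟪g, v⟫ = 0 := by
  have hK : finrank ℝ (Submodule.span ℝ (s : Set V)) ≤ s.card := finrank_span_finset_le_card s
  have hKo : (Submodule.span ℝ (s : Set V))ᗮ ≠ ⊥ := fun h => by
    have := (Submodule.span ℝ (s : Set V)).finrank_add_finrank_orthogonal
    rw [h, finrank_bot] at this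
    omega
  obtain ⟨g, hg, hg0⟩ := Submodule.exists_mem_ne_zero_of_ne_bot hKo
  refine ⟨g, hg0, fun v hv => ?_⟩
  rw [real_inner_comm]
  exact (Submodule.mem_orthogonal _ g).1 hg v (Submodule.subset_span hv)

theorem Ultrafilter.exists_norm_eq_one_eventually_inner_pos (U : Ultrafilter α) {w : α → V}
    (hw : ∀ᶠ a in U, w a ≠ 0) :
    ∃ q : V, ‖q‖ = 1 ∧ ∀ L : V, 0 < ⟪L, q⟫ → ∀ᶠ a in U, 0 < ⟪L, w a⟫ := by
  set u : α → V := fun a => ‖w a‖⁻¹ • w a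
  have hu : ∀ᶠ a in U, u a ∈ sphere (0 : V) 1 :=
    hw.mono fun a ha => by simp [u, norm_smul, ha]
  obtain ⟨q, hq, hlim⟩ :=
    (isCompact_sphere (0 : V) 1).ultrafilter_le_nhds (U.map u) (le_principal_iff.2 hu)
  refine ⟨q, by simpa using hq, fun L hL => ?_⟩
  have hLu : Tendsto (fun a => ⟪L, u a⟫) U (𝓝 ⟪L, q⟫) :=
    ((continuous_const.inner continuous_id).tendsto q).comp hlim
  filter_upwards [hLu.eventually_const_lt hL] with a ha
  rw [real_inner_smul_right] at ha
  exact pos_of_mul_pos_right ha (inv_nonneg.2 (norm_nonneg _))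

theorem Ultrafilter.exists_orthogonal_eventually_inner_pos (U : Ultrafilter α) {w : α → V}
    (hV : 2 ≤ finrank ℝ V) (hw : ∀ L ≠ 0, ∀ᶠ a in U, ⟪L, w a⟫ ≠ 0) {q : V} (hq : ‖q‖ = 1) :
    ∃ m : V, ‖m‖ = 1 ∧ ⟪m, q⟫ = 0 ∧
      ∀ L : V, ⟪L, q⟫ = 0 → 0 < ⟪L, m⟫ → ∀ᶠ a in U, 0 < ⟪L, w a⟫ := by
  set w' : α → V := fun a => w a - ⟪q, w a⟫ • q
  have hw' : ∀ L, ⟪L, q⟫ = 0 → ∀ a, ⟪L, w' a⟫ = ⟪L, w a⟫ := fun L hL a => by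
    simp [w', inner_sub_right, inner_smul_right, hL]
  have hqw' : ∀ a, ⟪q, w' a⟫ = 0 := fun a => by
    simp [w', inner_sub_right, inner_smul_right, hq]
  obtain ⟨L₁, hL₁, hL₁q⟩ := exists_ne_zero_forall_inner_eq_zero {q} (by simp; omega)
  obtain ⟨m, hm, hmpos⟩ := U.exists_norm_eq_one_eventually_inner_pos (w := w')
    ((hw L₁ hL₁).mono fun a ha (h0 : w' a = 0) =>
      ha (by rw [← hw' L₁ (hL₁q q (by simp)), h0, inner_zero_right]))
  have hmq : ⟪m, q⟫ = 0 := by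
    by_contra hne
    rcases lt_or_gt_of_ne hne with hlt | hlt
    · obtain ⟨a, ha⟩ := (hmpos (-q) (by rw [inner_neg_left, real_inner_comm]; linarith)).exists
      simp [inner_neg_left, hqw'] at ha
    · obtain ⟨a, ha⟩ := (hmpos q (by rwa [real_inner_comm])).exists
      simp [hqw'] at ha
  exact ⟨m, hm, hmq, fun L hLq hLm => (hmpos L hLm).mono fun a ha => by rwa [← hw' L hLq]⟩

theorem Ultrafilter.exists_lexicographic_triple (U : Ultrafilter α) {w : α → V}
    (hV : 3 ≤ finrank ℝ V) (hw : ∀ L ≠ 0, ∀ᶠ a in U, ⟪L, w a⟫ ≠ 0) :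
    ∃ f g h : V, (∀ᶠ a in U, 0 < ⟪g, w a⟫) ∧ (∀ᶠ a in U, 0 < ⟪h, w a⟫) ∧
      (∀ ε : ℝ, 0 < ε → ∀ᶠ a in U, 0 < ⟪ε • h - g, w a⟫) ∧
      ∀ c : ℝ, ∀ᶠ a in U, 0 < ⟪f - c • h, w a⟫ := by
  classical
  obtain ⟨L₀, hL₀, -⟩ := exists_ne_zero_forall_inner_eq_zero (∅ : Finset V) (by simp; omega)
  obtain ⟨q, hq, hqpos⟩ := U.exists_norm_eq_one_eventually_inner_pos
    ((hw L₀ hL₀).mono fun a ha (h0 : w a = 0) => ha (by rw [h0, inner_zero_right]))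
  obtain ⟨m, hm, hmq, hmpos⟩ := U.exists_orthogonal_eventually_inner_pos (by omega) hw hq
  obtain ⟨g₀, hg₀, hg₀qm⟩ := exists_ne_zero_forall_inner_eq_zero {q, m}
    (Finset.card_le_two.trans_lt (by omega))
  obtain ⟨g, hg, hgq, hgm⟩ : ∃ g : V, (∀ᶠ a in U, 0 < ⟪g, w a⟫) ∧ ⟪g, q⟫ = 0 ∧ ⟪g, m⟫ = 0 := by
    have : ∀ᶠ a in U, 0 < ⟪g₀, w a⟫ ∨ 0 < ⟪-g₀, w a⟫ := (hw g₀ hg₀).mono fun a ha => by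
      rw [inner_neg_left, neg_pos]
      exact ha.lt_or_gt.symm
    rcases Ultrafilter.eventually_or.1 this with h | h
    · exact ⟨g₀, h, hg₀qm q (by simp), hg₀qm m (by simp)⟩
    · exact ⟨-g₀, h, by simp [hg₀qm q (by simp)], by simp [hg₀qm m (by simp)]⟩
  refine ⟨q, g, m, hg, hmpos m hmq (by simp [hm]), fun ε hε => hmpos _ ?_ ?_, fun c => hqpos _ ?_⟩
  · simp [inner_sub_left, inner_smul_left, hmq, hgq]
  · simp [inner_sub_left, inner_smul_left, hgm, hm, hε]
  · simp [inner_sub_left, inner_smul_left, hmq, hq]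

end Lexicographic

local notation "ℝ²" => EuclideanSpace ℝ (Fin 2)

namespace LineTransversal

/-- `L = (n, k)` stands for the affine function `x ↦ ⟪n, x⟫ + k` and `homog x = (x, 1)` for the
homogeneous coordinates of a point, so that `⟪L, homog x⟫` is the value of `L` at `x`. -/
abbrev AffineFunctional := WithLp 2 (ℝ² × ℝ)

def homog (x : ℝ²) : AffineFunctional := WithLp.toLp 2 (x, 1)

theorem finrank_affineFunctional : finrank ℝ AffineFunctional = 3 := by
  rw [(WithLp.linearEquiv 2 ℝ (ℝ² × ℝ)).finrank_eq]
  simp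

theorem inner_homog (L : AffineFunctional) (x : ℝ²) : ⟪L, homog x⟫ = ⟪L.fst, x⟫ + L.snd := by
  simp [homog]

theorem inner_homog_add_smul (L : AffineFunctional) (x v : ℝ²) (t : ℝ) :
    ⟪L, homog (x + t • v)⟫ = ⟪L, homog x⟫ + t * ⟪L.fst, v⟫ := by
  simp only [inner_homog, inner_add_right, inner_smul_right]
  ring

theorem continuous_inner_homog (L : AffineFunctional) : Continuous fun x => ⟪L, homog x⟫ := by
  simp only [inner_homog]
  fun_prop

noncomputable def lineOf (L : AffineFunctional) : AffineSubspace ℝ ℝ² :=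
  AffineSubspace.mk' (-(L.snd / ‖L.fst‖ ^ 2) • L.fst) (ℝ ∙ L.fst)ᗮ

theorem mem_lineOf {L : AffineFunctional} (hL : L.fst ≠ 0) {x : ℝ²} :
    x ∈ lineOf L ↔ ⟪L, homog x⟫ = 0 := by
  have : ‖L.fst‖ ≠ 0 := norm_ne_zero_iff.2 hL
  rw [lineOf, AffineSubspace.mem_mk', vsub_eq_sub,
    Submodule.mem_orthogonal_singleton_iff_inner_right, inner_sub_right, inner_smul_right,
    real_inner_self_eq_norm_sq, inner_homog, real_inner_comm]
  field_simp
  constructor <;> intro h <;> linarith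

theorem isLine_lineOf {L : AffineFunctional} (hL : L.fst ≠ 0) : IsLine (lineOf L) := by
  have : Fact (finrank ℝ ℝ² = 1 + 1) := ⟨by simp⟩
  exact ⟨⟨_, AffineSubspace.self_mem_mk' _ _⟩, by
    rw [lineOf, AffineSubspace.direction_mk']
    exact Submodule.finrank_orthogonal_span_singleton hL⟩

theorem collinear_of_mem_line {L : AffineSubspace ℝ ℝ²} (hL : IsLine L) {x y z : ℝ²}
    (hx : x ∈ L) (hy : y ∈ L) (hz : z ∈ L) : Collinear ℝ ({x, y, z} : Set ℝ²) := by
  have hcol : Collinear ℝ (L : Set ℝ²) := by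
    rw [collinear_iff_finrank_le_one]
    exact hL.2.le
  exact hcol.subset (by rintro w (rfl | rfl | rfl) <;> assumption)

def disc (b : ℝ² × ℝ) : Set ℝ² := closedBall b.1 b.2

def Avoids (L : AffineFunctional) (b : ℝ² × ℝ) : Prop := ∀ x ∈ disc b, ⟪L, homog x⟫ ≠ 0

def PosOn (L : AffineFunctional) (b : ℝ² × ℝ) : Prop := ∀ x ∈ disc b, 0 < ⟪L, homog x⟫

theorem posOn_of_avoids {L : AffineFunctional} {b : ℝ² × ℝ} (hc : 0 < ⟪L, homog b.1⟫)
    (hL : Avoids L b) : PosOn L b := by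
  intro x hx
  by_contra hneg
  have hx' : ⟪L, homog x⟫ < 0 := lt_of_le_of_ne (not_lt.1 hneg) (hL x hx)
  have hdiff : ⟪L.fst, x - b.1⟫ = ⟪L, homog x⟫ - ⟪L, homog b.1⟫ := by
    simp only [inner_homog, inner_sub_right]
    ring
  -- `L` vanishes at the point with parameter `t` of the segment from the centre to `x`
  set t := ⟪L, homog b.1⟫ / (⟪L, homog b.1⟫ - ⟪L, homog x⟫)
  have ht : t ∈ Icc (0 : ℝ) 1 :=
    ⟨div_nonneg hc.le (by linarith), (div_le_one (by linarith)).2 (by linarith)⟩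
  refine hL _ ((convex_closedBall b.1 b.2).add_smul_sub_mem
    (mem_closedBall_self (dist_nonneg.trans hx)) hx ht) ?_
  have hne : ⟪L, homog b.1⟫ - ⟪L, homog x⟫ ≠ 0 := by linarith
  rw [inner_homog_add_smul, hdiff]
  dsimp only [t]
  field_simp
  ring

theorem eventually_posOn {U : Filter (ℝ² × ℝ)} (hU : ∀ L ≠ 0, ∀ᶠ b in U, Avoids L b)
    {L : AffineFunctional} (hL : ∀ᶠ b in U, 0 < ⟪L, homog b.1⟫) : ∀ᶠ b in U, PosOn L b := by
  rcases eq_or_ne L 0 with rfl | hL0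
  · exact hL.mono fun b hb => by simp at hb
  · filter_upwards [hL, hU L hL0] with b hc hb using posOn_of_avoids hc hb

noncomputable def ratio (L h : AffineFunctional) (x : ℝ²) : ℝ := ⟪L, homog x⟫ / ⟪h, homog x⟫

theorem lt_ratio_iff {L h : AffineFunctional} {x : ℝ²} (hx : 0 < ⟪h, homog x⟫) {c : ℝ} :
    c < ratio L h x ↔ 0 < ⟪L - c • h, homog x⟫ := by
  rw [ratio, lt_div_iff₀ hx, inner_sub_left, real_inner_smul_left, sub_pos]

theorem ratio_lt_iff {L h : AffineFunctional} {x : ℝ²} (hx : 0 < ⟪h, homog x⟫) {c : ℝ} :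
    ratio L h x < c ↔ 0 < ⟪c • h - L, homog x⟫ := by
  rw [ratio, div_lt_iff₀ hx, inner_sub_left, real_inner_smul_left, sub_pos]

theorem ratio_collinear (f g h : AffineFunctional) {x y z : ℝ²}
    (hcol : Collinear ℝ ({x, y, z} : Set ℝ²)) (hx : ⟪h, homog x⟫ ≠ 0) (hy : ⟪h, homog y⟫ ≠ 0)
    (hz : ⟪h, homog z⟫ ≠ 0) :
    (ratio g h y - ratio g h x) * (ratio f h z - ratio f h y) =
      (ratio g h z - ratio g h y) * (ratio f h y - ratio f h x) := by
  obtain ⟨v, hv⟩ := (collinear_iff_of_mem (mem_insert x _)).1 hcol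
  obtain ⟨s, rfl⟩ := hv y (by simp)
  obtain ⟨t, rfl⟩ := hv z (by simp)
  simp only [vadd_eq_add, add_comm _ x, ratio, inner_homog_add_smul] at hy hz ⊢
  generalize ⟪f, homog x⟫ = F₀, ⟪g, homog x⟫ = G₀, ⟪h, homog x⟫ = H₀, ⟪f.fst, v⟫ = F₁,
    ⟪g.fst, v⟫ = G₁, ⟪h.fst, v⟫ = H₁ at *
  rw [div_sub_div _ _ hy hx, div_sub_div _ _ hz hy, div_sub_div _ _ hz hy, div_sub_div _ _ hy hx,
    div_mul_div_comm, div_mul_div_comm, div_eq_div_iff (by positivity) (by positivity)]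
  ring

theorem exists_ratio_bounds (f g h : AffineFunctional) {b : ℝ² × ℝ} (hg : PosOn g b)
    (hh : PosOn h b) : ∃ τ > 0, ∃ C, ∀ x ∈ disc b, τ ≤ ratio g h x ∧ |ratio f h x| ≤ C := by
  have hcont : ∀ L, ContinuousOn (ratio L h) (disc b) := fun L =>
    (continuous_inner_homog L).continuousOn.div (continuous_inner_homog h).continuousOn
      fun x hx => (hh x hx).ne'
  obtain ⟨τ, hτ, hτg⟩ := (isCompact_closedBall b.1 b.2).exists_forall_le' (hcont g)
    fun x hx => div_pos (hg x hx) (hh x hx)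
  obtain ⟨C, hC⟩ := (isCompact_closedBall b.1 b.2).exists_bound_of_continuousOn (hcont f)
  exact ⟨τ, hτ, C, fun x hx => ⟨hτg x hx, hC x hx⟩⟩

theorem slope_ne_of_lt {Sx Sy Sz Tx Ty Tz : ℝ} (hTy : 0 < Ty) (hTxy : 2 * Ty ≤ Tx) (hTz : 0 < Tz)
    (hSxy : Sx < Sy) (hSyz : 2 * Sy - Sx < Sz) :
    (Ty - Tx) * (Sz - Sy) ≠ (Tz - Ty) * (Sy - Sx) := by
  intro h
  nlinarith [mul_nonneg (sub_nonneg.2 hTxy) (by linarith : (0 : ℝ) ≤ Sz - Sy),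
    mul_pos hTy (by linarith : (0 : ℝ) < Sz - 2 * Sy + Sx), mul_pos hTz (sub_pos.2 hSxy)]

def NoCommonTransversal (a b c : ℝ² × ℝ) : Prop :=
  ∀ x ∈ disc a, ∀ y ∈ disc b, ∀ z ∈ disc c, ¬ Collinear ℝ ({x, y, z} : Set ℝ²)

theorem eventually_noCommonTransversal {U : Filter (ℝ² × ℝ)} {f g h : AffineFunctional}
    (hg : ∀ᶠ b in U, PosOn g b) (hh : ∀ᶠ b in U, PosOn h b)
    (hgh : ∀ ε : ℝ, 0 < ε → ∀ᶠ b in U, PosOn (ε • h - g) b)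
    (hfh : ∀ c : ℝ, ∀ᶠ b in U, PosOn (f - c • h) b) :
    ∀ᶠ a in U, ∀ᶠ b in U, ∀ᶠ c in U, NoCommonTransversal a b c := by
  filter_upwards [hg, hh] with a hga hha
  obtain ⟨τ, hτ, Ca, ha⟩ := exists_ratio_bounds f g h hga hha
  filter_upwards [hg, hh, hgh (τ / 2) (by positivity), hfh Ca] with b hgb hhb hτb hCb
  obtain ⟨_, _, Cb, hb⟩ := exists_ratio_bounds f g h hgb hhb
  filter_upwards [hg, hh, hfh (2 * Cb + Ca)] with c hgc hhc hCc
  intro x hx y hy z hz hcol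
  have hTy : ratio g h y < τ / 2 := (ratio_lt_iff (hhb y hy)).2 (hτb y hy)
  have hSy : Ca < ratio f h y := (lt_ratio_iff (hhb y hy)).2 (hCb y hy)
  have hSz : 2 * Cb + Ca < ratio f h z := (lt_ratio_iff (hhc z hz)).2 (hCc z hz)
  obtain ⟨hTx, hSx⟩ := ha x hx
  have hSy' := (hb y hy).2
  exact slope_ne_of_lt (Ty := ratio g h y) (Tz := ratio g h z)
    (div_pos (hgb y hy) (hhb y hy)) (by linarith) (div_pos (hgc z hz) (hhc z hz))
    (by linarith [le_abs_self (ratio f h x)])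
    (by linarith [le_abs_self (ratio f h y), neg_abs_le (ratio f h x)])
    (ratio_collinear f g h hcol (hha x hx).ne' (hhb y hy).ne' (hhc z hz).ne')

def HasFiniteLineTransversal (F : Set (ℝ² × ℝ)) : Prop :=
  ∃ P : Set (AffineSubspace ℝ ℝ²), P.Finite ∧ (∀ L ∈ P, IsLine L) ∧
    ∀ b ∈ F, ∃ L ∈ P, (disc b ∩ (L : Set ℝ²)).Nonempty

theorem hasFiniteLineTransversal_of_cover {F : Set (ℝ² × ℝ)} (T : Finset AffineFunctional)
    (hT : ∀ b ∈ F, ∃ L ∈ T, L ≠ 0 ∧ ¬ Avoids L b) : HasFiniteLineTransversal F := by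
  refine ⟨lineOf '' {L | L ∈ T ∧ L.fst ≠ 0}, (T.finite_toSet.subset fun L hL => hL.1).image _,
    fun _ ⟨L, hL, hl⟩ => hl ▸ isLine_lineOf hL.2, fun b hb => ?_⟩
  obtain ⟨L, hLT, hL0, hmeet⟩ := hT b hb
  obtain ⟨x, hx, hxL⟩ : ∃ x ∈ disc b, ⟪L, homog x⟫ = 0 := by simpa [Avoids] using hmeet
  have hfst : L.fst ≠ 0 := fun h0 => hL0 <| by
    rw [inner_homog, h0, inner_zero_left, zero_add] at hxL
    rw [← WithLp.ofLp_eq_zero]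
    exact Prod.ext h0 hxL
  exact ⟨lineOf L, ⟨L, ⟨hLT, hfst⟩, rfl⟩, x, hx, (mem_lineOf hfst).2 hxL⟩

theorem exists_ultrafilter_avoids {F : Set (ℝ² × ℝ)} (hF : ¬ HasFiniteLineTransversal F) :
    ∃ U : Ultrafilter (ℝ² × ℝ), F ∈ U ∧ ∀ L ≠ 0, ∀ᶠ b in U, Avoids L b := by
  have hne : ∀ T : Finset AffineFunctional, {b ∈ F | ∀ L ∈ T, L ≠ 0 → Avoids L b}.Nonempty := by
    intro T
    by_contra h
    exact hF <| hasFiniteLineTransversal_of_cover T fun b hb => by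
      by_contra! H
      exact h ⟨b, hb, H⟩
  set G := ⨅ T : Finset AffineFunctional, 𝓟 {b ∈ F | ∀ L ∈ T, L ≠ 0 → Avoids L b}
  have : G.NeBot := iInf_neBot_of_directed' (Antitone.directed_ge fun T T' hT =>
      principal_mono.2 fun b hb => ⟨hb.1, fun L hL => hb.2 L (Finset.mem_of_subset hT hL)⟩)
    fun T => principal_neBot_iff.2 (hne T)
  exact ⟨Ultrafilter.of G, Ultrafilter.of_le G (mem_iInf_of_mem ∅ fun b hb => hb.1),
    fun L hL => Ultrafilter.of_le G (mem_iInf_of_mem {L} fun b hb => hb.2 L (by simp) hL)⟩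

def HasPiercedTriple (S : Set (ℝ² × ℝ)) : Prop :=
  ∃ b₁ ∈ S, ∃ b₂ ∈ S, ∃ b₃ ∈ S, b₁ ≠ b₂ ∧ b₁ ≠ b₃ ∧ b₂ ≠ b₃ ∧
    ∃ L : AffineSubspace ℝ ℝ², IsLine L ∧ (disc b₁ ∩ (L : Set ℝ²)).Nonempty ∧
      (disc b₂ ∩ (L : Set ℝ²)).Nonempty ∧ (disc b₃ ∩ (L : Set ℝ²)).Nonempty

theorem exists_lt_lt_of_ne {P : ℕ → Prop} {a b c : ℕ} (hab : a ≠ b) (hac : a ≠ c) (hbc : b ≠ c)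
    (ha : P a) (hb : P b) (hc : P c) : ∃ i j k, i < j ∧ j < k ∧ P i ∧ P j ∧ P k := by
  have hcard : ({a, b, c} : Finset ℕ).card = 3 :=
    Finset.card_eq_three.2 ⟨a, b, c, hab, hac, hbc, rfl⟩
  set e := ({a, b, c} : Finset ℕ).orderEmbOfFin hcard
  have hP : ∀ i, P (e i) := fun i => by
    have := Finset.orderEmbOfFin_mem _ hcard i
    simp only [Finset.mem_insert, Finset.mem_singleton] at this
    rcases this with h | h | h <;> rw [h] <;> assumption
  exact ⟨e 0, e 1, e 2, e.strictMono (by decide), e.strictMono (by decide), hP 0, hP 1, hP 2⟩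

theorem not_hasPiercedTriple_range {s : ℕ → ℝ² × ℝ}
    (hs : ∀ i j k, i < j → j < k → NoCommonTransversal (s i) (s j) (s k)) :
    ¬ HasPiercedTriple (range s) := by
  rintro ⟨_, ⟨n₁, rfl⟩, _, ⟨n₂, rfl⟩, _, ⟨n₃, rfl⟩, h₁₂, h₁₃, h₂₃, L, hL, h₁, h₂, h₃⟩
  obtain ⟨i, j, k, hij, hjk, ⟨x, hx, hxL⟩, ⟨y, hy, hyL⟩, ⟨z, hz, hzL⟩⟩ :=
    exists_lt_lt_of_ne (P := fun n => (disc (s n) ∩ (L : Set ℝ²)).Nonempty)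
      (ne_of_apply_ne s h₁₂) (ne_of_apply_ne s h₁₃) (ne_of_apply_ne s h₂₃) h₁ h₂ h₃
  exact hs i j k hij hjk x hx y hy z hz (collinear_of_mem_line hL hxL hyL hzL)

theorem injective_of_noCommonTransversal {s : ℕ → ℝ² × ℝ} (hs0 : ∀ n, 0 ≤ (s n).2)
    (hs : ∀ i j k, i < j → j < k → NoCommonTransversal (s i) (s j) (s k)) :
    Function.Injective s := by
  have key : ∀ i j, i < j → s i ≠ s j := fun i j hij hsij => by
    have hc : (s i).1 ∈ disc (s j) := by rw [← hsij]; exact mem_closedBall_self (hs0 i)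
    refine hs i j (j + 1) hij j.lt_succ_self _ (mem_closedBall_self (hs0 i)) _ hc _
      (mem_closedBall_self (hs0 (j + 1))) ?_
    rw [insert_eq_of_mem (mem_insert _ _)]
    exact collinear_pair ℝ _ _
  intro i j hij
  by_contra hne
  rcases lt_or_gt_of_ne hne with h | h
  exacts [key i j h hij, key j i h hij.symm]

end LineTransversal

open LineTransversal

theorem aleph0_three_theorem_lines_general
    (F : Set (EuclideanSpace ℝ (Fin 2) × ℝ))
    (hr : ∀ b ∈ F, 0 < b.2)
    (hprop : ∀ S ⊆ F, S.Infinite →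
      ∃ b₁ ∈ S, ∃ b₂ ∈ S, ∃ b₃ ∈ S, b₁ ≠ b₂ ∧ b₁ ≠ b₃ ∧ b₂ ≠ b₃ ∧
        ∃ L : AffineSubspace ℝ (EuclideanSpace ℝ (Fin 2)), IsLine L ∧
          (Metric.closedBall b₁.1 b₁.2 ∩ (L : Set (EuclideanSpace ℝ (Fin 2)))).Nonempty ∧
          (Metric.closedBall b₂.1 b₂.2 ∩ (L : Set (EuclideanSpace ℝ (Fin 2)))).Nonempty ∧
          (Metric.closedBall b₃.1 b₃.2 ∩ (L : Set (EuclideanSpace ℝ (Fin 2)))).Nonempty) :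
    ∃ P : Set (AffineSubspace ℝ (EuclideanSpace ℝ (Fin 2))),
      P.Finite ∧ (∀ L ∈ P, IsLine L) ∧
      ∀ b ∈ F, ∃ L ∈ P,
        (Metric.closedBall b.1 b.2 ∩ (L : Set (EuclideanSpace ℝ (Fin 2)))).Nonempty := by
  by_contra hno
  obtain ⟨U, hFU, hU⟩ := exists_ultrafilter_avoids hno
  have hcenter : ∀ L ≠ 0, ∀ᶠ b : ℝ² × ℝ in U, ⟪L, homog b.1⟫ ≠ 0 := fun L hL => by
    filter_upwards [hU L hL, hFU] with b hb hbF using hb _ (mem_closedBall_self (hr b hbF).le)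
  obtain ⟨f, g, h, hg, hh, hgh, hfh⟩ :=
    U.exists_lexicographic_triple finrank_affineFunctional.ge hcenter
  have hsep := eventually_noCommonTransversal (eventually_posOn hU hg) (eventually_posOn hU hh)
    (fun ε hε => eventually_posOn hU (hgh ε hε)) (fun c => eventually_posOn hU (hfh c))
  obtain ⟨s, hs⟩ := Filter.exists_seq_of_eventually_triple <| (hsep.and hFU).mono
    fun a ha => ha.1.mono fun b hb => hb.mono fun c hc => (⟨ha.2, hc⟩ : a ∈ F ∧ _)
  have hsF : ∀ n, s n ∈ F := fun n => (hs n (n + 1) (n + 2) (by omega) (by omega)).1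
  have hsep' := fun i j k hij hjk => (hs i j k hij hjk).2
  exact not_hasPiercedTriple_range hsep' <| hprop _ (range_subset_iff.2 hsF) <|
    infinite_range_of_injective <|
      injective_of_noCommonTransversal (fun n => (hr _ (hsF n)).le) hsep'

/-- The `(ℵ₀, 3)`-theorem for lines in the plane: if among every infinite subfamily of an
infinite family of closed discs (of positive radii) some three can be pierced by one line, then
the whole family can be pierced by finitely many lines. -/
theorem aleph0_three_theorem_lines
    (F : Set (EuclideanSpace ℝ (Fin 2) × ℝ)) (hinf : F.Infinite)
    (hr : ∀ b ∈ F, 0 < b.2)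
    (hprop : ∀ S ⊆ F, S.Infinite →
      ∃ b₁ ∈ S, ∃ b₂ ∈ S, ∃ b₃ ∈ S, b₁ ≠ b₂ ∧ b₁ ≠ b₃ ∧ b₂ ≠ b₃ ∧
        ∃ L : AffineSubspace ℝ (EuclideanSpace ℝ (Fin 2)), IsLine L ∧
          (Metric.closedBall b₁.1 b₁.2 ∩ (L : Set (EuclideanSpace ℝ (Fin 2)))).Nonempty ∧
          (Metric.closedBall b₂.1 b₂.2 ∩ (L : Set (EuclideanSpace ℝ (Fin 2)))).Nonempty ∧
          (Metric.closedBall b₃.1 b₃.2 ∩ (L : Set (EuclideanSpace ℝ (Fin 2)))).Nonempty) :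
    ∃ P : Set (AffineSubspace ℝ (EuclideanSpace ℝ (Fin 2))),
      P.Finite ∧ (∀ L ∈ P, IsLine L) ∧
      ∀ b ∈ F, ∃ L ∈ P,
        (Metric.closedBall b.1 b.2 ∩ (L : Set (EuclideanSpace ℝ (Fin 2)))).Nonempty :=
  aleph0_three_theorem_lines_general F hr hprop
end
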